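/- arXiv:0907.0811 — 8 statements merged into one kernel-verified Lean document; each statement's English description precedes it below -/
import Mathlib

section
/- If u is a column-standard λ-tableau (columns strictly increasing top to bottom), then its row-straightening ū, obtained by sorting each row of u into increasing order, is a standard tableau (both row-standard and column-standard). -/
/-- If `u` is a column-standard `λ`-tableau (columns strictly
increasing top to bottom), then its row-straightening `v = ū`, obtained by
sorting each row of `u` into increasing order, is a standard tableau
(both row-standard and column-standard).

A `λ`-tableau is encoded as a function `u i j` giving the entry in row `i`
(of `k` rows), column `j` (with `j < lam i`), which is a bijection from the
cells of the Young diagram of `lam` onto `{1,…,n}`.  The row-straightening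
`v` is characterised by having strictly increasing rows whose entries agree,
as sets, with the corresponding rows of `u`. -/
theorem stmt_0 (n k : ℕ) (lam : ℕ → ℕ)
    (hanti : ∀ i j, i ≤ j → lam j ≤ lam i)
    (hsupp : ∀ i, lam i ≠ 0 ↔ i < k)
    (hsum : ∑ i ∈ Finset.range k, lam i = n)
    (u v : ℕ → ℕ → ℕ)
    -- `u` is a bijective filling of the diagram with `{1, …, n}`
    (hbij : ∀ m, m ∈ Finset.Icc 1 n ↔ ∃ i j, i < k ∧ j < lam i ∧ u i j = m)
    (hinj : ∀ i j i' j', i < k → j < lam i → i' < k → j' < lam i' →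
      u i j = u i' j' → i = i' ∧ j = j')
    -- `u` is column-standard
    (hcolu : ∀ i j, i + 1 < k → j < lam (i + 1) → u i j < u (i + 1) j)
    -- `v` is the row-straightening of `u`: rows increase, and each row of `v`
    -- has the same set of entries as the corresponding row of `u`
    (hrowv : ∀ i j j', i < k → j < j' → j' < lam i → v i j < v i j')
    (hsame : ∀ i, i < k →
      (Finset.range (lam i)).image (v i) = (Finset.range (lam i)).image (u i)) :
    -- `v` is standard: row-standard and column-standard
    (∀ i j j', i < k → j < j' → j' < lam i → v i j < v i j') ∧
    (∀ i j, i + 1 < k → j < lam (i + 1) → v i j < v (i + 1) j) := by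
  refine ⟨hrowv, ?_⟩
  intro i j hik hj
  have hik' : i < k := Nat.lt_of_succ_lt hik
  have hlam : lam (i + 1) ≤ lam i := hanti i (i + 1) (Nat.le_succ i)
  have hji : j < lam i := lt_of_lt_of_le hj hlam
  by_contra hle
  push_neg at hle
  -- `hle : v (i+1) j ≤ v i j`
  set A : Finset ℕ := (Finset.range (j + 1)).image (v (i + 1)) with hA
  have hAsub : A ⊆ (Finset.range (lam (i + 1))).image (u (i + 1)) := by
    rw [← hsame (i + 1) hik]
    apply Finset.image_subset_image
    intro x hx
    simp only [Finset.mem_range] at hx ⊢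
    omega
  have hAcard : A.card = j + 1 := by
    rw [hA, Finset.card_image_of_injOn, Finset.card_range]
    intro a ha b hb hab
    simp only [Finset.coe_range, Set.mem_Iio] at ha hb
    by_contra hne
    rcases Nat.lt_or_ge a b with h | h
    · exact absurd hab (Nat.ne_of_lt (hrowv (i + 1) a b hik h (by omega)))
    · have hba : b < a := by omega
      exact absurd hab.symm (Nat.ne_of_lt (hrowv (i + 1) b a hik hba (by omega)))
  set C : Finset ℕ := (Finset.range (lam (i + 1))).filter (fun c => u (i + 1) c ∈ A) with hC
  have hAC : A ⊆ C.image (u (i + 1)) := by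
    intro a ha
    obtain ⟨c, hc, hca⟩ := Finset.mem_image.mp (hAsub ha)
    simp only [Finset.mem_range] at hc
    refine Finset.mem_image.mpr ⟨c, ?_, hca⟩
    rw [hC, Finset.mem_filter, Finset.mem_range]
    exact ⟨hc, by rw [hca]; exact ha⟩
  have hCcard : j + 1 ≤ C.card :=
    calc j + 1 = A.card := hAcard.symm
    _ ≤ (C.image (u (i + 1))).card := Finset.card_le_card hAC
    _ ≤ C.card := Finset.card_image_le
  set B : Finset ℕ := C.image (u i) with hB
  have hBcard : B.card = C.card := by
    rw [hB]
    apply Finset.card_image_of_injOn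
    intro a ha b hb hab
    simp only [hC, Finset.coe_filter, Finset.mem_range, Set.mem_setOf_eq] at ha hb
    exact (hinj i a i b hik' (lt_of_lt_of_le ha.1 hlam) hik'
      (lt_of_lt_of_le hb.1 hlam) hab).2
  have hBsub : B ⊆ ((Finset.range (lam i)).image (v i)).filter (· < v (i + 1) j) := by
    intro b hb
    obtain ⟨c, hc, hcb⟩ := Finset.mem_image.mp hb
    rw [hC, Finset.mem_filter, Finset.mem_range] at hc
    obtain ⟨hcl, hcA⟩ := hc
    have h1 : u i c < u (i + 1) c := hcolu i c hik hcl
    have h2 : u (i + 1) c ≤ v (i + 1) j := by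
      obtain ⟨j', hj', hj'a⟩ := Finset.mem_image.mp hcA
      simp only [Finset.mem_range] at hj'
      rcases Nat.lt_or_ge j' j with h | h
      · exact Nat.le_of_lt (hj'a ▸ hrowv (i + 1) j' j hik h hj)
      · have : j' = j := by omega
        rw [← hj'a, this]
    rw [Finset.mem_filter]
    constructor
    · rw [hsame i hik']
      exact Finset.mem_image.mpr ⟨c, Finset.mem_range.mpr (lt_of_lt_of_le hcl hlam), hcb⟩
    · omega
  have hfsub : ((Finset.range (lam i)).image (v i)).filter (· < v (i + 1) j)
      ⊆ (Finset.range j).image (v i) := by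
    intro x hx
    rw [Finset.mem_filter] at hx
    obtain ⟨hx1, hx2⟩ := hx
    have hx2' : x < v (i + 1) j := hx2
    obtain ⟨c, hc, hcx⟩ := Finset.mem_image.mp hx1
    subst hcx
    simp only [Finset.mem_range] at hc
    refine Finset.mem_image.mpr ⟨c, Finset.mem_range.mpr ?_, rfl⟩
    by_contra hcj
    push_neg at hcj
    rcases Nat.lt_or_ge j c with h | h
    · have := hrowv i j c hik' h hc
      omega
    · have hcj' : c = j := by omega
      subst hcj'
      omega
  have : j + 1 ≤ j := by
    calc j + 1 ≤ C.card := hCcard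
    _ = B.card := hBcard.symm
    _ ≤ (((Finset.range (lam i)).image (v i)).filter (· < v (i + 1) j)).card :=
        Finset.card_le_card hBsub
    _ ≤ ((Finset.range j).image (v i)).card := Finset.card_le_card hfsub
    _ ≤ j := le_trans Finset.card_image_le (le_of_eq (Finset.card_range j))
  omega
end

section
/- Let λ be a rectangular partition and let u be a λ-tableau whose columns are strictly increasing. Then sorting each row of u into increasing order yields a tableau whose columns are still strictly increasing. -/
/-- Let `λ` be a rectangular partition (`k` rows of length `m`)
and let `u` be a `λ`-tableau (a `k × m` matrix with distinct entries from
`{1,…,km}`) whose columns are strictly increasing.  Then sorting each row of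
`u` into increasing order yields a tableau `v` whose columns are still
strictly increasing.  The row-sorted tableau `v` is characterised by having
strictly increasing rows whose entries agree, as sets, with those of the
corresponding rows of `u`. -/
theorem stmt_1 (k m : ℕ) (u v : Fin k → Fin m → ℕ)
    -- distinct entries from {1, ..., km}
    (hdistinct : Function.Injective (fun q : Fin k × Fin m => u q.1 q.2))
    (hrange : ∀ i j, u i j ∈ Finset.Icc 1 (k * m))
    -- columns of u strictly increasing: u[i][j] < u[i+1][j]
    (hcolu : ∀ (i : ℕ) (hi : i + 1 < k) (j : Fin m),
      u ⟨i, by omega⟩ j < u ⟨i + 1, hi⟩ j)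
    -- v is obtained from u by sorting each row increasingly
    (hrowv : ∀ (i : Fin k) (j j' : Fin m), j < j' → v i j < v i j')
    (hsame : ∀ i : Fin k, Finset.image (v i) Finset.univ = Finset.image (u i) Finset.univ) :
    -- columns of v are still strictly increasing
    ∀ (i : ℕ) (hi : i + 1 < k) (j : Fin m),
      v ⟨i, by omega⟩ j < v ⟨i + 1, hi⟩ j := by
  intro i hi j
  set r1 : Fin k := ⟨i, by omega⟩ with hr1
  set r2 : Fin k := ⟨i + 1, hi⟩ with hr2
  set b := v r2 j with hb
  have huinj : ∀ r : Fin k, Function.Injective (u r) := by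
    intro r a a' h
    have := hdistinct (a₁ := (r, a)) (a₂ := (r, a')) h
    simpa using this
  have hvmono : ∀ (r : Fin k) (a a' : Fin m), a ≤ a' → v r a ≤ v r a' := by
    intro r a a' h
    rcases h.lt_or_eq with h | h
    · exact (hrowv r a a' h).le
    · rw [h]
  have hvinj : ∀ r : Fin k, Function.Injective (v r) := by
    intro r a a' h
    by_contra hne
    rcases lt_or_gt_of_ne hne with h' | h'
    · exact absurd h (hrowv r a a' h').ne
    · exact absurd h.symm (hrowv r a' a h').ne
  -- A: columns c with u r2 c ≤ b
  set A : Finset (Fin m) := Finset.univ.filter fun c => u r2 c ≤ b with hA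
  set B : Finset (Fin m) := Finset.univ.filter fun c => u r1 c < b with hB
  set S : Finset (Fin m) := Finset.univ.filter fun j'' => v r1 j'' < b with hS
  have hcardA : (j : ℕ) + 1 ≤ A.card := by
    have himg : (Finset.Iic j).image (v r2) ⊆ A.image (u r2) := by
      intro x hx
      rcases Finset.mem_image.mp hx with ⟨j', hj', rfl⟩
      have hle : v r2 j' ≤ b := hvmono r2 j' j (Finset.mem_Iic.mp hj')
      have : v r2 j' ∈ Finset.image (u r2) Finset.univ := by
        rw [← hsame]; exact Finset.mem_image_of_mem _ (Finset.mem_univ _)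
      rcases Finset.mem_image.mp this with ⟨c, _, hc⟩
      refine Finset.mem_image.mpr ⟨c, ?_, hc⟩
      simp only [hA, Finset.mem_filter, Finset.mem_univ, true_and]
      rw [hc]; exact hle
    have h1 : ((Finset.Iic j).image (v r2)).card = (j : ℕ) + 1 := by
      rw [Finset.card_image_of_injective _ (hvinj r2), Fin.card_Iic]
    have h2 : (A.image (u r2)).card = A.card :=
      Finset.card_image_of_injective _ (huinj r2)
    calc (j : ℕ) + 1 = ((Finset.Iic j).image (v r2)).card := h1.symm
      _ ≤ (A.image (u r2)).card := Finset.card_le_card himg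
      _ = A.card := h2
  have hAB : A ⊆ B := by
    intro c hc
    simp only [hA, Finset.mem_filter, Finset.mem_univ, true_and] at hc
    simp only [hB, Finset.mem_filter, Finset.mem_univ, true_and]
    exact lt_of_lt_of_le (hcolu i hi c) hc
  have hcardB : (j : ℕ) + 1 ≤ B.card := le_trans hcardA (Finset.card_le_card hAB)
  have hSB : B.card = S.card := by
    have h1 : B.image (u r1) = (Finset.univ.image (u r1)).filter (fun x => x < b) := by
      ext x
      simp only [hB, Finset.mem_image, Finset.mem_filter, Finset.mem_univ, true_and]
      constructor
      · rintro ⟨c, hc, rfl⟩; exact ⟨⟨c, rfl⟩, hc⟩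
      · rintro ⟨⟨c, rfl⟩, hc⟩; exact ⟨c, hc, rfl⟩
    have h2 : S.image (v r1) = (Finset.univ.image (v r1)).filter (fun x => x < b) := by
      ext x
      simp only [hS, Finset.mem_image, Finset.mem_filter, Finset.mem_univ, true_and]
      constructor
      · rintro ⟨c, hc, rfl⟩; exact ⟨⟨c, rfl⟩, hc⟩
      · rintro ⟨⟨c, rfl⟩, hc⟩; exact ⟨c, hc, rfl⟩
    have h3 : B.image (u r1) = S.image (v r1) := by rw [h1, h2, hsame r1]
    calc B.card = (B.image (u r1)).card := (Finset.card_image_of_injective _ (huinj r1)).symm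
      _ = (S.image (v r1)).card := by rw [h3]
      _ = S.card := Finset.card_image_of_injective _ (hvinj r1)
  have hcardS : (j : ℕ) + 1 ≤ S.card := hSB ▸ hcardB
  -- exists j'' ∈ S with j ≤ j''
  by_contra hcon
  push_neg at hcon
  have hsub : S ⊆ Finset.Iio j := by
    intro j'' hj''
    simp only [hS, Finset.mem_filter, Finset.mem_univ, true_and] at hj''
    rw [Finset.mem_Iio]
    by_contra h
    push_neg at h
    exact absurd (lt_of_le_of_lt (hvmono r1 j j'' h) hj'') (not_lt.mpr hcon)
  have := le_trans hcardS (le_trans (Finset.card_le_card hsub) (by rw [Fin.card_Iio]))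
  omega
end

section
/- Let u be a column-standard λ-tableau and suppose for some i, j the row-straightening ū satisfies ū_{i+1,j} < ū_{i,j}. Then there exist an entry a among the first j entries of row i+1 of ū and an entry b among entries j through λ_i of row i of ū such that a and b both lie in the same column of u, giving a ≤ ū_{i+1,j} < ū_{i,j} ≤ b, a contradiction with column-standardness of u. Hence ū is column-standard. -/
/-- Let `u` be a column-standard `λ`-tableau with
row-straightening `v = ū`.  If for some `i, j` we had `ū_{i+1,j} < ū_{i,j}`,
then there exist an entry `a` among the first `j+1` entries of row `i+1`
of `ū` and an entry `b` among the entries in columns `j,…,λ_i - 1` of row `i`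
of `ū`, such that `a` and `b` lie in the same column of `u` (with `a` in row
`i+1` of `u` and `b` in row `i` of `u`), giving
`a ≤ ū_{i+1,j} < ū_{i,j} ≤ b`, contradicting column-standardness of `u`.
Hence `ū` is column-standard. (Rows and columns are indexed from `0`.) -/
theorem stmt_2 (n k : ℕ) (lam : ℕ → ℕ)
    (hanti : ∀ i j, i ≤ j → lam j ≤ lam i)
    (hsupp : ∀ i, lam i ≠ 0 ↔ i < k)
    (hsum : ∑ i ∈ Finset.range k, lam i = n)
    (u v : ℕ → ℕ → ℕ)
    (hbij : ∀ m, m ∈ Finset.Icc 1 n ↔ ∃ i j, i < k ∧ j < lam i ∧ u i j = m)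
    (hinj : ∀ i j i' j', i < k → j < lam i → i' < k → j' < lam i' →
      u i j = u i' j' → i = i' ∧ j = j')
    -- `u` is column-standard
    (hcolu : ∀ i j, i + 1 < k → j < lam (i + 1) → u i j < u (i + 1) j)
    -- `v` is the row-straightening of `u`
    (hrowv : ∀ i j j', i < k → j < j' → j' < lam i → v i j < v i j')
    (hsame : ∀ i, i < k →
      (Finset.range (lam i)).image (v i) = (Finset.range (lam i)).image (u i)) :
    -- the pigeonhole step: a failure of column-standardness of v yields a, b
    -- in a common column of u with a ≤ v (i+1) j < v i j ≤ b
    (∀ i j, i + 1 < k → j < lam (i + 1) → v (i + 1) j < v i j →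
      ∃ a b : ℕ,
        (∃ j', j' ≤ j ∧ v (i + 1) j' = a) ∧
        (∃ j', j ≤ j' ∧ j' < lam i ∧ v i j' = b) ∧
        (∃ c, c < lam (i + 1) ∧ u (i + 1) c = a ∧ u i c = b) ∧
        a ≤ v (i + 1) j ∧ v (i + 1) j < v i j ∧ v i j ≤ b) ∧
    -- hence v is column-standard
    (∀ i j, i + 1 < k → j < lam (i + 1) → v i j < v (i + 1) j) := by
  classical
  have hvinj : ∀ r, r < k → ∀ a b, a < lam r → b < lam r → v r a = v r b → a = b := by
    intro r hr a b ha hb hab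
    rcases lt_trichotomy a b with h | h | h
    · exact absurd hab (ne_of_lt (hrowv r a b hr h hb))
    · exact h
    · exact absurd hab.symm (ne_of_lt (hrowv r b a hr h ha))
  have main : ∀ i j, i + 1 < k → j < lam (i + 1) → v (i + 1) j < v i j →
      ∃ a b : ℕ,
        (∃ j', j' ≤ j ∧ v (i + 1) j' = a) ∧
        (∃ j', j ≤ j' ∧ j' < lam i ∧ v i j' = b) ∧
        (∃ c, c < lam (i + 1) ∧ u (i + 1) c = a ∧ u i c = b) ∧
        a ≤ v (i + 1) j ∧ v (i + 1) j < v i j ∧ v i j ≤ b := by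
    intro i j hik hj hlt
    have hik' : i < k := by omega
    have hll : lam (i + 1) ≤ lam i := hanti i (i + 1) (by omega)
    have hjlam : j < lam i := lt_of_lt_of_le hj hll
    set CA := (Finset.range (lam (i + 1))).filter
      (fun c => ∃ j' ≤ j, u (i + 1) c = v (i + 1) j') with hCA
    set CB := (Finset.range (lam i)).filter
      (fun c => ∃ j', j ≤ j' ∧ j' < lam i ∧ u i c = v i j') with hCB
    have hA : j + 1 ≤ CA.card := by
      have hsub : (Finset.range (j + 1)).image (v (i + 1)) ⊆ CA.image (u (i + 1)) := by
        intro m hm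
        simp only [Finset.mem_image, Finset.mem_range] at hm
        obtain ⟨j', hj', rfl⟩ := hm
        have hj'l : j' < lam (i + 1) := by omega
        have hmem : v (i + 1) j' ∈ (Finset.range (lam (i + 1))).image (u (i + 1)) := by
          rw [← hsame (i + 1) hik]
          exact Finset.mem_image_of_mem _ (Finset.mem_range.mpr hj'l)
        simp only [Finset.mem_image, Finset.mem_range] at hmem
        obtain ⟨c, hc, hcv⟩ := hmem
        refine Finset.mem_image.mpr ⟨c, ?_, hcv⟩
        simp only [hCA, Finset.mem_filter, Finset.mem_range]
        exact ⟨hc, j', by omega, hcv⟩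
      have h1 : ((Finset.range (j + 1)).image (v (i + 1))).card = j + 1 := by
        rw [Finset.card_image_of_injOn, Finset.card_range]
        intro a ha b hb hab
        simp only [Finset.coe_range, Set.mem_Iio] at ha hb
        exact hvinj (i + 1) hik a b (by omega) (by omega) hab
      calc j + 1 = ((Finset.range (j + 1)).image (v (i + 1))).card := h1.symm
        _ ≤ (CA.image (u (i + 1))).card := Finset.card_le_card hsub
        _ ≤ CA.card := Finset.card_image_le
    have hB : lam i - j ≤ CB.card := by
      have hsub : (Finset.Ico j (lam i)).image (v i) ⊆ CB.image (u i) := by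
        intro m hm
        simp only [Finset.mem_image, Finset.mem_Ico] at hm
        obtain ⟨j', hj', rfl⟩ := hm
        have hmem : v i j' ∈ (Finset.range (lam i)).image (u i) := by
          rw [← hsame i hik']
          exact Finset.mem_image_of_mem _ (Finset.mem_range.mpr hj'.2)
        simp only [Finset.mem_image, Finset.mem_range] at hmem
        obtain ⟨c, hc, hcv⟩ := hmem
        refine Finset.mem_image.mpr ⟨c, ?_, hcv⟩
        simp only [hCB, Finset.mem_filter, Finset.mem_range]
        exact ⟨hc, j', hj'.1, hj'.2, hcv⟩
      have h1 : ((Finset.Ico j (lam i)).image (v i)).card = lam i - j := by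
        rw [Finset.card_image_of_injOn, Nat.card_Ico]
        intro a ha b hb hab
        simp only [Finset.coe_Ico, Set.mem_Ico] at ha hb
        exact hvinj i hik' a b ha.2 hb.2 hab
      calc lam i - j = ((Finset.Ico j (lam i)).image (v i)).card := h1.symm
        _ ≤ (CB.image (u i)).card := Finset.card_le_card hsub
        _ ≤ CB.card := Finset.card_image_le
    have hinter : (CA ∩ CB).Nonempty := by
      by_contra h
      rw [Finset.not_nonempty_iff_eq_empty] at h
      have hdisj : Disjoint CA CB := Finset.disjoint_iff_inter_eq_empty.mpr h
      have hunion : CA ∪ CB ⊆ Finset.range (lam i) := by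
        intro c hc
        rcases Finset.mem_union.mp hc with h' | h'
        · exact Finset.mem_range.mpr
            (lt_of_lt_of_le (Finset.mem_range.mp (Finset.mem_filter.mp h').1) hll)
        · exact (Finset.mem_filter.mp h').1
      have hcard := Finset.card_le_card hunion
      rw [Finset.card_union_of_disjoint hdisj, Finset.card_range] at hcard
      omega
    obtain ⟨c, hc⟩ := hinter
    rw [Finset.mem_inter] at hc
    obtain ⟨hcA, hcB⟩ := hc
    simp only [hCA, Finset.mem_filter, Finset.mem_range] at hcA
    simp only [hCB, Finset.mem_filter, Finset.mem_range] at hcB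
    obtain ⟨hclt, j₁, hj₁, hua⟩ := hcA
    obtain ⟨_, j₂, hj₂, hj₂l, hub⟩ := hcB
    refine ⟨v (i + 1) j₁, v i j₂, ⟨j₁, hj₁, rfl⟩, ⟨j₂, hj₂, hj₂l, rfl⟩,
      ⟨c, hclt, hua, hub⟩, ?_, hlt, ?_⟩
    · rcases eq_or_lt_of_le hj₁ with h | h
      · rw [h]
      · exact le_of_lt (hrowv (i + 1) j₁ j hik h hj)
    · rcases eq_or_lt_of_le hj₂ with h | h
      · rw [h]
      · exact le_of_lt (hrowv i j j₂ hik' h hj₂l)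
  refine ⟨main, ?_⟩
  intro i j hik hj
  have hik' : i < k := by omega
  have hjlam : j < lam i := lt_of_lt_of_le hj (hanti i (i + 1) (by omega))
  rcases lt_trichotomy (v i j) (v (i + 1) j) with h | h | h
  · exact h
  · exfalso
    have hm1 : v i j ∈ (Finset.range (lam i)).image (u i) := by
      rw [← hsame i hik']
      exact Finset.mem_image_of_mem _ (Finset.mem_range.mpr hjlam)
    have hm2 : v (i + 1) j ∈ (Finset.range (lam (i + 1))).image (u (i + 1)) := by
      rw [← hsame (i + 1) hik]
      exact Finset.mem_image_of_mem _ (Finset.mem_range.mpr hj)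
    simp only [Finset.mem_image, Finset.mem_range] at hm1 hm2
    obtain ⟨c', hc', huc'⟩ := hm1
    obtain ⟨c, hc, huc⟩ := hm2
    have : u i c' = u (i + 1) c := by rw [huc', huc, h]
    have := (hinj i c' (i + 1) c hik' hc' hik hc this).1
    omega
  · exfalso
    obtain ⟨a, b, _, _, ⟨c, hclt, hua, hub⟩, h1, h2, h3⟩ := main i j hik hj h
    have := hcolu i c hik hclt
    omega
end

section
/- Let p be a prime, let γ be a partition that is a p-core, let w ∈ ℕ, and let γ + wp denote the partition (γ_1 + wp, γ_2, ..., γ_k). Then the multiset of hook lengths of γ + wp that are divisible by p is exactly {p, 2p, ..., wp}. -/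
/-- The cells (i, j) of the Young diagram of a partition `lam` with `k` rows,
rows and columns indexed from `0`. -/
def cellsOf (lam : ℕ → ℕ) (k : ℕ) : Finset (ℕ × ℕ) :=
  (Finset.range k).biUnion (fun i => ({i} : Finset ℕ) ×ˢ Finset.range (lam i))

/-- The `j`-th part of the conjugate partition of `lam` (which has `k` rows). -/
def conjPart (lam : ℕ → ℕ) (k j : ℕ) : ℕ :=
  ((Finset.range k).filter (fun i => j < lam i)).card

/-- The hook length of the cell `q = (i, j)`:
`h(i,j) = (lam i - j) + (lam' j - i) - 1`. -/
def hookLen (lam : ℕ → ℕ) (k : ℕ) (q : ℕ × ℕ) : ℕ :=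
  (lam q.1 - q.2) + (conjPart lam k q.2 - q.1) - 1

lemma mem_cellsOf {lam : ℕ → ℕ} {k i j : ℕ} :
    (i, j) ∈ cellsOf lam k ↔ i < k ∧ j < lam i := by
  simp only [cellsOf, Finset.mem_biUnion, Finset.mem_range, Finset.mem_product,
    Finset.mem_singleton]
  constructor
  · rintro ⟨a, ha, ⟨rfl, hb⟩⟩
    exact ⟨ha, hb⟩
  · rintro ⟨h1, h2⟩
    exact ⟨i, h1, rfl, h2⟩

/-- Let `p` be a prime, `γ` a `p`-core (no hook length divisible
by `p`), and `w ≥ 1`.  Let `γ + wp = (γ₀ + wp, γ₁, …)` be the corresponding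
initial partition.  Then the multiset of hook lengths of `γ + wp` divisible
by `p` is exactly `{p, 2p, …, wp}`. -/
theorem stmt_4 (p : ℕ) (hp : p.Prime) (k w : ℕ) (hw : 0 < w) (gam : ℕ → ℕ)
    (hanti : ∀ i j, i ≤ j → gam j ≤ gam i)
    (hsupp : ∀ i, gam i ≠ 0 ↔ i < k)
    (hcore : ∀ q ∈ cellsOf gam k, ¬ p ∣ hookLen gam k q) :
    let mu : ℕ → ℕ := fun i => if i = 0 then gam 0 + w * p else gam i
    let k' : ℕ := max k 1
    Multiset.filter (fun h => p ∣ h)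
        (Multiset.map (hookLen mu k') (cellsOf mu k').val)
      = Multiset.map (fun r => (r + 1) * p) (Finset.range w).val := by
  intro mu k'
  have hppos : 0 < p := hp.pos
  have hmu0 : mu 0 = gam 0 + w * p := by simp [mu]
  have hmu : ∀ i, i ≠ 0 → mu i = gam i := by
    intro i hi; simp [mu, hi]
  have hk'pos : 0 < k' := lt_of_lt_of_le one_pos (le_max_right k 1)
  have hkk' : ∀ i, i < k → i < k' := fun i h => lt_of_lt_of_le h (le_max_left k 1)
  set B : Finset (ℕ × ℕ) := ({0} : Finset ℕ) ×ˢ Finset.Ico (gam 0) (gam 0 + w * p) with hB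
  have hmemB : ∀ i j : ℕ, (i, j) ∈ B ↔ i = 0 ∧ gam 0 ≤ j ∧ j < gam 0 + w * p := by
    intro i j; simp [hB, Finset.mem_product]; tauto
  have hdisj : Disjoint (cellsOf gam k) B := by
    rw [Finset.disjoint_left]
    rintro ⟨i, j⟩ hA hBq
    rw [mem_cellsOf] at hA
    rw [hmemB] at hBq
    obtain ⟨hi0, hj1, hj2⟩ := hBq
    subst hi0
    have : j < gam 0 := hA.2
    omega
  have hcells : cellsOf mu k' = (cellsOf gam k).disjUnion B hdisj := by
    ext ⟨i, j⟩
    rw [Finset.mem_disjUnion, mem_cellsOf, mem_cellsOf, hmemB]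
    by_cases hi : i = 0
    · subst hi
      rw [hmu0]
      have h0k : gam 0 ≠ 0 → 0 < k := fun h => (hsupp 0).mp h
      constructor
      · rintro ⟨-, hj⟩
        by_cases hjg : j < gam 0
        · exact Or.inl ⟨h0k (by omega), hjg⟩
        · exact Or.inr ⟨rfl, by omega, hj⟩
      · rintro (⟨hk0, hj⟩ | ⟨-, hj1, hj2⟩)
        · exact ⟨hk'pos, by omega⟩
        · exact ⟨hk'pos, hj2⟩
    · rw [hmu i hi]
      constructor
      · rintro ⟨hik', hj⟩
        have : gam i ≠ 0 := by omega
        exact Or.inl ⟨(hsupp i).mp this, hj⟩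
      · rintro (⟨hik, hj⟩ | ⟨h, -⟩)
        · exact ⟨hkk' i hik, hj⟩
        · exact absurd h hi
  -- conjugate parts
  have hconj_lt : ∀ j, j < gam 0 → conjPart mu k' j = conjPart gam k j := by
    intro j hj
    have hk : 0 < k := (hsupp 0).mp (by omega)
    have hkeq : k' = k := max_eq_left hk
    unfold conjPart
    rw [hkeq]
    congr 1
    apply Finset.filter_congr
    intro i _
    by_cases hi : i = 0
    · subst hi; rw [hmu0]; constructor <;> intro <;> omega
    · rw [hmu i hi]
  have hconj_ge : ∀ j, gam 0 ≤ j → j < gam 0 + w * p → conjPart mu k' j = 1 := by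
    intro j h1 h2
    unfold conjPart
    have : (Finset.range k').filter (fun i => j < mu i) = {0} := by
      ext i
      simp only [Finset.mem_filter, Finset.mem_range, Finset.mem_singleton]
      constructor
      · rintro ⟨hik', hj⟩
        by_contra hi
        rw [hmu i hi] at hj
        have : gam i ≤ gam 0 := hanti 0 i (Nat.zero_le i)
        omega
      · rintro rfl
        exact ⟨hk'pos, by rw [hmu0]; omega⟩
    rw [this, Finset.card_singleton]
  -- hook lengths on old cells not divisible by p
  have hhookA : ∀ q ∈ cellsOf gam k, ¬ p ∣ hookLen mu k' q := by
    rintro ⟨i, j⟩ hq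
    rw [mem_cellsOf] at hq
    obtain ⟨hik, hj⟩ := hq
    have hj0 : j < gam 0 := lt_of_lt_of_le hj (hanti 0 i (Nat.zero_le i))
    have hc := hconj_lt j hj0
    by_cases hi : i = 0
    · subst hi
      have h0mem : 0 ∈ (Finset.range k).filter (fun i => j < gam i) := by
        simp [Finset.mem_filter, hik, hj]
      have hcpos : 1 ≤ conjPart gam k j :=
        Finset.card_pos.mpr ⟨0, h0mem⟩
      have heq : hookLen mu k' (0, j) = hookLen gam k (0, j) + w * p := by
        unfold hookLen
        simp only
        rw [hc, hmu0]
        unfold conjPart at hcpos ⊢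
        omega
      intro hdvd
      rw [heq] at hdvd
      have : p ∣ hookLen gam k (0, j) := by
        have := Nat.dvd_sub hdvd (dvd_mul_left p w)
        simpa using this
      exact hcore (0, j) (mem_cellsOf.mpr ⟨hik, hj⟩) this
    · have heq : hookLen mu k' (i, j) = hookLen gam k (i, j) := by
        unfold hookLen
        simp only
        rw [hc, hmu i hi]
      rw [heq]
      exact hcore (i, j) (mem_cellsOf.mpr ⟨hik, hj⟩)
  -- hook lengths on new cells
  have hhookB : ∀ j, gam 0 ≤ j → j < gam 0 + w * p →
      hookLen mu k' (0, j) = gam 0 + w * p - j := by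
    intro j h1 h2
    unfold hookLen
    simp only
    rw [hconj_ge j h1 h2, hmu0]
    omega
  -- split the multiset
  have hsplit : (cellsOf mu k').val = (cellsOf gam k).val + B.val := by
    rw [hcells]; rfl
  rw [hsplit, Multiset.map_add, Multiset.filter_add]
  have hA0 : Multiset.filter (fun h => p ∣ h)
      (Multiset.map (hookLen mu k') (cellsOf gam k).val) = 0 := by
    rw [Multiset.filter_eq_nil]
    intro a ha
    obtain ⟨q, hq, rfl⟩ := Multiset.mem_map.mp ha
    exact hhookA q hq
  rw [hA0, zero_add]
  -- rewrite new-cell hooks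
  have hmapB : Multiset.map (hookLen mu k') B.val
      = Multiset.map (fun j => gam 0 + w * p - j)
          (Finset.Ico (gam 0) (gam 0 + w * p)).val := by
    rw [hB, Finset.singleton_product, Finset.map_val, Multiset.map_map]
    apply Multiset.map_congr rfl
    intro j hj
    rw [Finset.mem_val, Finset.mem_Ico] at hj
    exact hhookB j hj.1 hj.2
  rw [hmapB]
  -- final cleanup: compare two nodup multisets
  have hnodL : (Multiset.filter (fun h => p ∣ h)
      (Multiset.map (fun j => gam 0 + w * p - j)
        (Finset.Ico (gam 0) (gam 0 + w * p)).val)).Nodup := by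
    apply Multiset.Nodup.filter
    apply Multiset.Nodup.map_on
    · intro x hx y hy hxy
      rw [Finset.mem_val, Finset.mem_Ico] at hx hy
      omega
    · exact (Finset.Ico _ _).nodup
  have hnodR : (Multiset.map (fun r => (r + 1) * p) (Finset.range w).val).Nodup := by
    apply Multiset.Nodup.map_on
    · intro x _ y _ hxy
      have := Nat.eq_of_mul_eq_mul_right hppos hxy
      omega
    · exact (Finset.range w).nodup
  rw [Multiset.Nodup.ext hnodL hnodR]
  intro a
  simp only [Multiset.mem_filter, Multiset.mem_map, Finset.mem_val, Finset.mem_Ico,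
    Finset.mem_range]
  constructor
  · rintro ⟨⟨j, ⟨hj1, hj2⟩, rfl⟩, hdvd⟩
    obtain ⟨c, hc⟩ := hdvd
    refine ⟨c - 1, ?_, ?_⟩
    · -- c - 1 < w
      have h1 : 1 ≤ gam 0 + w * p - j := by omega
      have h2 : gam 0 + w * p - j ≤ w * p := by omega
      have hcpos : 1 ≤ c := by
        rcases Nat.eq_zero_or_pos c with h | h
        · subst h; simp at hc; omega
        · exact h
      have : p * c ≤ w * p := by omega
      have : c ≤ w := by
        have hpc : p * c ≤ p * w := by
          calc p * c ≤ w * p := this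
          _ = p * w := Nat.mul_comm w p
        exact Nat.le_of_mul_le_mul_left hpc hppos
      omega
    · -- (c - 1 + 1) * p = gam 0 + w * p - j
      have hcpos : 1 ≤ c := by
        rcases Nat.eq_zero_or_pos c with h | h
        · subst h; simp at hc; omega
        · exact h
      have : c - 1 + 1 = c := by omega
      rw [this, Nat.mul_comm]
      omega
  · rintro ⟨r, hr, rfl⟩
    have h1 : p ≤ (r + 1) * p := Nat.le_mul_of_pos_left p (by omega)
    have h2 : (r + 1) * p ≤ w * p := Nat.mul_le_mul_right p (by omega)
    refine ⟨⟨gam 0 + w * p - (r + 1) * p, ⟨by omega, by omega⟩, by omega⟩, ⟨r + 1, Nat.mul_comm (r + 1) p⟩⟩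
end

section
/- Let p be a prime, γ a p-core partition of m, w ∈ ℕ, and n = m + wp. Writing [k]_p for the largest power of p dividing k, the p-part of the dimension of the Specht module S^{γ+wp} satisfies [dim S^{γ+wp}]_p = [n!]_p / [(wp)!]_p, where dim S^{γ+wp} = n! / (product of hook lengths of γ + wp) by the hook length formula. -/
/-- The product of all hook lengths of `lam`. -/
def hookProd (lam : ℕ → ℕ) (k : ℕ) : ℕ :=
  ∏ q ∈ cellsOf lam k, hookLen lam k q

/-- `[m]_p`: the largest power of `p` dividing `m`. -/
def ppart (p m : ℕ) : ℕ := p ^ (m.factorization p)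

open Finset

namespace Stmt5Aux

lemma mem_iff_lt_card (s : Finset ℕ) (hdc : ∀ a b : ℕ, a ≤ b → b ∈ s → a ∈ s) (x : ℕ) :
    x ∈ s ↔ x < s.card := by
  constructor
  · intro hx
    have h : Finset.range (x + 1) ⊆ s := by
      intro y hy
      exact hdc y x (Nat.lt_succ_iff.mp (Finset.mem_range.mp hy)) hx
    simpa using Finset.card_le_card h
  · intro hx
    by_contra hxs
    have h : s ⊆ Finset.range x := by
      intro y hy
      rw [Finset.mem_range]
      by_contra hyx
      exact hxs (hdc x y (le_of_not_gt hyx) hy)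
    have := Finset.card_le_card h
    simp at this; omega

lemma lt_conjPart_iff (lam : ℕ → ℕ) (k : ℕ) (hanti : ∀ i j, i ≤ j → lam j ≤ lam i) (i j : ℕ) :
    i < conjPart lam k j ↔ i < k ∧ j < lam i := by
  have hdc : ∀ a b : ℕ, a ≤ b → b ∈ (range k).filter (fun i => j < lam i) →
      a ∈ (range k).filter (fun i => j < lam i) := by
    intro a b hab hb
    simp only [mem_filter, mem_range] at *
    exact ⟨lt_of_le_of_lt hab hb.1, lt_of_lt_of_le hb.2 (hanti a b hab)⟩
  rw [conjPart, ← mem_iff_lt_card _ hdc]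
  simp

lemma conjPart_le (lam : ℕ → ℕ) (k j : ℕ) : conjPart lam k j ≤ k :=
  le_trans (card_le_card (filter_subset _ _)) (by simp)

lemma conjPart_anti (lam : ℕ → ℕ) (k : ℕ) {j j' : ℕ} (h : j ≤ j') :
    conjPart lam k j' ≤ conjPart lam k j := by
  apply card_le_card
  intro x hx
  simp only [mem_filter] at *
  exact ⟨hx.1, lt_of_le_of_lt h hx.2⟩

lemma hook_eq (lam : ℕ → ℕ) (k : ℕ) (hanti : ∀ i j, i ≤ j → lam j ≤ lam i) {i j : ℕ}
    (hik : i < k) (hj : j < lam i) :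
    hookLen lam k (i, j) + (i + j + 1) = lam i + conjPart lam k j := by
  have h1 : i < conjPart lam k j := (lt_conjPart_iff lam k hanti i j).mpr ⟨hik, hj⟩
  unfold hookLen
  simp only
  omega

def ell (lam : ℕ → ℕ) (k i : ℕ) : ℕ := lam i + (k - 1 - i)

lemma ell_strict (lam : ℕ → ℕ) (k : ℕ) (hanti : ∀ i j, i ≤ j → lam j ≤ lam i) {i t : ℕ}
    (h : i < t) (ht : t < k) : ell lam k t < ell lam k i := by
  have := hanti i t (le_of_lt h)
  unfold ell; omega

lemma prod_Icc_one (n : ℕ) : (∏ x ∈ Icc 1 n, x) = n.factorial := by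
  induction n with
  | zero => simp
  | succ n ih =>
      rw [Finset.prod_Icc_succ_top (by omega : 1 ≤ n + 1), ih, Nat.factorial_succ, mul_comm]

lemma row_prod (lam : ℕ → ℕ) (k : ℕ) (hanti : ∀ i j, i ≤ j → lam j ≤ lam i)
    {i : ℕ} (hik : i < k) :
    (∏ j ∈ range (lam i), hookLen lam k (i, j)) *
      (∏ t ∈ Ico (i + 1) k, (ell lam k i - ell lam k t)) = (ell lam k i).factorial := by
  set f : ℕ → ℕ := fun j => hookLen lam k (i, j) with hf
  set g : ℕ → ℕ := fun t => ell lam k i - ell lam k t with hg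
  have injf : Set.InjOn f (range (lam i)) := by
    intro j1 h1 j2 h2 heq
    simp only [coe_range, Set.mem_Iio] at h1 h2
    rcases le_total j1 j2 with h | h
    · have e1 := hook_eq lam k hanti hik h1
      have e2 := hook_eq lam k hanti hik h2
      have := conjPart_anti lam k h
      simp only [hf] at heq
      omega
    · have e1 := hook_eq lam k hanti hik h1
      have e2 := hook_eq lam k hanti hik h2
      have := conjPart_anti lam k h
      simp only [hf] at heq
      omega
  have gmono : ∀ a b, i < a → a < b → b < k → g a < g b := by
    intro a b ha hab hb
    have h1 := ell_strict lam k hanti hab hb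
    have h2 := ell_strict lam k hanti ha (lt_trans hab hb)
    simp only [hg]
    omega
  have injg : Set.InjOn g (Ico (i + 1) k) := by
    intro t1 h1 t2 h2 heq
    simp only [coe_Ico, Set.mem_Ico] at h1 h2
    rcases lt_trichotomy t1 t2 with h | h | h
    · have := gmono t1 t2 (by omega) h h2.2; omega
    · exact h
    · have := gmono t2 t1 (by omega) h h1.2; omega
  have hdisj : Disjoint ((range (lam i)).image f) ((Ico (i + 1) k).image g) := by
    rw [Finset.disjoint_left]
    intro x hx hx'
    simp only [mem_image, mem_range, mem_Ico] at hx hx'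
    obtain ⟨j, hj, hjx⟩ := hx
    obtain ⟨t, ht, htx⟩ := hx'
    have e1 := hook_eq lam k hanti hik hj
    have e2 := ell_strict lam k hanti (show i < t by omega) ht.2
    simp only [hf] at hjx
    simp only [hg] at htx
    rcases Nat.lt_or_ge j (lam t) with hc | hc
    · have e3 : t < conjPart lam k j := (lt_conjPart_iff lam k hanti t j).mpr ⟨ht.2, hc⟩
      unfold ell at htx e2
      omega
    · have e3 : ¬ t < conjPart lam k j := by
        intro hcon
        exact absurd ((lt_conjPart_iff lam k hanti t j).mp hcon).2 (by omega)
      unfold ell at htx e2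
      omega
  have hsub : ((range (lam i)).image f) ∪ ((Ico (i + 1) k).image g) ⊆ Icc 1 (ell lam k i) := by
    intro x hx
    simp only [mem_union, mem_image, mem_range, mem_Ico, mem_Icc] at hx ⊢
    rcases hx with ⟨j, hj, hjx⟩ | ⟨t, ht, htx⟩
    · have e1 := hook_eq lam k hanti hik hj
      have e2 : i < conjPart lam k j := (lt_conjPart_iff lam k hanti i j).mpr ⟨hik, hj⟩
      have e3 := conjPart_le lam k j
      simp only [hf] at hjx
      unfold ell
      omega
    · have e2 := ell_strict lam k hanti (show i < t by omega) ht.2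
      simp only [hg] at htx
      omega
  have hcard : ((range (lam i)).image f ∪ (Ico (i + 1) k).image g).card = ell lam k i := by
    rw [Finset.card_union_of_disjoint hdisj, Finset.card_image_of_injOn injf,
      Finset.card_image_of_injOn injg]
    simp only [card_range, Nat.card_Ico]
    unfold ell
    omega
  have hset : ((range (lam i)).image f) ∪ ((Ico (i + 1) k).image g) = Icc 1 (ell lam k i) := by
    apply Finset.eq_of_subset_of_card_le hsub
    rw [hcard, Nat.card_Icc]
    omega
  calc (∏ j ∈ range (lam i), f j) * (∏ t ∈ Ico (i + 1) k, g t)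
      = (∏ x ∈ (range (lam i)).image f, x) * (∏ x ∈ (Ico (i + 1) k).image g, x) := by
        rw [Finset.prod_image injf, Finset.prod_image injg]
    _ = ∏ x ∈ ((range (lam i)).image f) ∪ ((Ico (i + 1) k).image g), x := by
        rw [Finset.prod_union hdisj]
    _ = ∏ x ∈ Icc 1 (ell lam k i), x := by rw [hset]
    _ = (ell lam k i).factorial := prod_Icc_one _

lemma mem_cellsOf (lam : ℕ → ℕ) (k : ℕ) (q : ℕ × ℕ) :
    q ∈ cellsOf lam k ↔ q.1 < k ∧ q.2 < lam q.1 := by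
  obtain ⟨i, j⟩ := q
  simp [cellsOf, Finset.mem_biUnion, Finset.mem_product, eq_comm]

lemma hookProd_eq_double (lam : ℕ → ℕ) (k : ℕ) :
    hookProd lam k = ∏ i ∈ range k, ∏ j ∈ range (lam i), hookLen lam k (i, j) := by
  rw [hookProd, cellsOf, prod_biUnion]
  · apply prod_congr rfl
    intro i _
    rw [Finset.singleton_product, Finset.prod_map]
    rfl
  · intro a _ b _ hab
    simp only [Finset.disjoint_left]
    intro q hq hq'
    simp only [Finset.mem_product, Finset.mem_singleton] at hq hq'
    exact hab (hq.1 ▸ hq'.1.symm ▸ rfl)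

lemma key_identity (lam : ℕ → ℕ) (k : ℕ) (hanti : ∀ i j, i ≤ j → lam j ≤ lam i) :
    hookProd lam k * (∏ i ∈ range k, ∏ t ∈ Ico (i + 1) k, (ell lam k i - ell lam k t))
      = ∏ i ∈ range k, (ell lam k i).factorial := by
  rw [hookProd_eq_double, ← Finset.prod_mul_distrib]
  exact prod_congr rfl fun i hi => row_prod lam k hanti (mem_range.mp hi)

lemma prod_Ioi_fin {M : Type*} [CommMonoid M] (k : ℕ) (F : ℕ → ℕ → M) :
    (∏ i : Fin k, ∏ j ∈ Ioi i, F (i : ℕ) (j : ℕ))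
      = ∏ i ∈ range k, ∏ t ∈ Ico (i + 1) k, F i t := by
  rw [← Fin.prod_univ_eq_prod_range (fun i => ∏ t ∈ Ico (i + 1) k, F i t)]
  apply Finset.prod_congr rfl
  intro i _
  refine Finset.prod_nbij (fun j => (j : ℕ)) ?_ ?_ ?_ ?_
  · intro j hj
    simp only [Finset.mem_Ioi, Finset.mem_Ico] at *
    exact ⟨hj, j.isLt⟩
  · intro a _ b _ h
    exact Fin.val_injective h
  · intro t ht
    simp only [Finset.coe_Ico, Set.mem_Ico] at ht
    exact ⟨⟨t, ht.2⟩, by simpa [Finset.mem_Ioi, Fin.lt_def] using ht.1, rfl⟩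
  · intro a _
    rfl

lemma natAbs_prod {α : Type*} (s : Finset α) (f : α → ℤ) :
    (∏ x ∈ s, f x).natAbs = ∏ x ∈ s, (f x).natAbs := by
  exact map_prod Int.natAbsHom f s

lemma prod_fact_dvd_fact_mul (lam : ℕ → ℕ) (k : ℕ) (hanti : ∀ i j, i ≤ j → lam j ≤ lam i) :
    (∏ i ∈ range k, (ell lam k i).factorial) ∣
      (∑ i ∈ range k, lam i).factorial *
        ∏ i ∈ range k, ∏ t ∈ Ico (i + 1) k, (ell lam k i - ell lam k t) := by
  classical
  set n := ∑ i ∈ range k, lam i with hn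
  set l : Fin k → ℕ := fun i => ell lam k (i : ℕ) with hl
  set v : Fin k → ℤ := fun i => (l i : ℤ) with hv
  -- the determinant identity
  have hdet : (Matrix.vandermonde v).det =
      (Matrix.of (fun i j : Fin k => ((l i).descFactorial (j : ℕ) : ℤ))).det := by
    rw [Matrix.det_eval_matrixOfPolynomials_eq_det_vandermonde v
      (fun j => descPochhammer ℤ (j : ℕ))
      (fun j => descPochhammer_natDegree ℤ (j : ℕ))
      (fun j => monic_descPochhammer ℤ (j : ℕ))]
    congr 1
    ext i j
    simp only [Matrix.of_apply, hv]
    rw [descPochhammer_eval_eq_descFactorial]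
  -- ℤ-divisibility of n! * det by ∏ l i !
  have hdvdZ : ((∏ i : Fin k, (l i).factorial : ℕ) : ℤ) ∣
      ((n.factorial : ℕ) : ℤ) *
        (Matrix.of (fun i j : Fin k => ((l i).descFactorial (j : ℕ) : ℤ))).det := by
    rw [Matrix.det_apply', Finset.mul_sum]
    apply Finset.dvd_sum
    intro σ _
    have hterm : (∏ i : Fin k, (l (σ i)).factorial) ∣
        n.factorial * ∏ i : Fin k, (l (σ i)).descFactorial (i : ℕ) := by
      by_cases hall : ∀ i : Fin k, (i : ℕ) ≤ l (σ i)
      · have hsum : ∑ i : Fin k, (l (σ i) - (i : ℕ)) = n := by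
          have h1 : (∑ i : Fin k, (l (σ i) - (i : ℕ))) + (∑ i : Fin k, (i : ℕ))
              = ∑ i : Fin k, l (σ i) := by
            rw [← Finset.sum_add_distrib]
            exact Finset.sum_congr rfl fun i _ => by have := hall i; omega
          have h2 : (∑ i : Fin k, l (σ i)) = ∑ i : Fin k, l i := Equiv.sum_comp σ l
          have h3 : (∑ i : Fin k, l i) = n + ∑ i : Fin k, (i : ℕ) := by
            have hrefl : ∑ i ∈ range k, (k - 1 - i) = ∑ i ∈ range k, i :=
              Finset.sum_range_reflect (fun j => j) k
            rw [Fin.sum_univ_eq_sum_range (fun i => ell lam k i),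
              Fin.sum_univ_eq_sum_range (fun i => i)]
            unfold ell
            rw [Finset.sum_add_distrib, hrefl, hn]
          omega
        obtain ⟨c, hc⟩ := (show (∏ i : Fin k, (l (σ i) - (i : ℕ)).factorial) ∣ n.factorial from
          hsum ▸ Nat.prod_factorial_dvd_factorial_sum _ _)
        have hprodfac : (∏ i : Fin k, (l (σ i)).factorial)
            = (∏ i : Fin k, (l (σ i) - (i : ℕ)).factorial) *
              ∏ i : Fin k, (l (σ i)).descFactorial (i : ℕ) := by
          rw [← Finset.prod_mul_distrib]
          exact Finset.prod_congr rfl fun i _ =>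
            (Nat.factorial_mul_descFactorial (hall i)).symm
        exact ⟨c, by rw [hc, hprodfac]; ring⟩
      · push_neg at hall
        obtain ⟨i, hi⟩ := hall
        have hz : (∏ i : Fin k, (l (σ i)).descFactorial (i : ℕ)) = 0 :=
          Finset.prod_eq_zero (Finset.mem_univ i) (Nat.descFactorial_eq_zero_iff_lt.mpr hi)
        rw [hz, mul_zero]
        exact dvd_zero _
    have hperm : (∏ i : Fin k, (l i).factorial) = ∏ i : Fin k, (l (σ i)).factorial :=
      (Equiv.prod_comp σ (fun i => (l i).factorial)).symm
    rw [← hperm] at hterm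
    have hcast : ((∏ i : Fin k, (l i).factorial : ℕ) : ℤ) ∣
        ((n.factorial : ℕ) : ℤ) * ∏ i : Fin k, ((l (σ i)).descFactorial (i : ℕ) : ℤ) := by
      have := Int.natCast_dvd_natCast.mpr hterm
      push_cast at this ⊢
      exact this
    rw [mul_left_comm]
    exact Dvd.dvd.mul_left hcast _
  -- take natAbs
  have habs : ((Matrix.vandermonde v).det).natAbs
      = ∏ i ∈ range k, ∏ t ∈ Ico (i + 1) k, (ell lam k i - ell lam k t) := by
    rw [Matrix.det_vandermonde,
      ← prod_Ioi_fin k (fun a b => ell lam k a - ell lam k b), natAbs_prod]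
    apply Finset.prod_congr rfl
    intro i _
    rw [natAbs_prod]
    apply Finset.prod_congr rfl
    intro j hj
    have hij : (i : ℕ) < (j : ℕ) := Fin.lt_def.mp (Finset.mem_Ioi.mp hj)
    have h2 := ell_strict lam k hanti hij j.isLt
    have hvj : v j = (ell lam k (j : ℕ) : ℤ) := rfl
    have hvi : v i = (ell lam k (i : ℕ) : ℤ) := rfl
    rw [hvj, hvi]
    omega
  rw [hdet] at habs
  have := Int.natCast_dvd.mp hdvdZ
  rw [Int.natAbs_mul, Int.natAbs_natCast, habs] at this
  rwa [← Fin.prod_univ_eq_prod_range (fun i => (ell lam k i).factorial)]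

/-- The hook product of a partition with `k` (weakly decreasing) rows divides `n!`. -/
theorem hookProd_dvd_factorial (lam : ℕ → ℕ) (k : ℕ)
    (hanti : ∀ i j, i ≤ j → lam j ≤ lam i) :
    hookProd lam k ∣ (∑ i ∈ range k, lam i).factorial := by
  have hD : 0 < ∏ i ∈ range k, ∏ t ∈ Ico (i + 1) k, (ell lam k i - ell lam k t) := by
    apply Finset.prod_pos
    intro i hi
    apply Finset.prod_pos
    intro t ht
    rw [mem_Ico] at ht
    have := ell_strict lam k hanti (show i < t by omega) ht.2
    omega
  have h1 := key_identity lam k hanti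
  have h2 := prod_fact_dvd_fact_mul lam k hanti
  rw [← h1] at h2
  exact (Nat.mul_dvd_mul_iff_right hD).mp h2

end Stmt5Aux

/-- Let `p` be a prime, `γ` a `p`-core partition of `m`, `w ≥ 1`
and `n = m + wp`.  The dimension of the Specht module `S^{γ+wp}` is
`n!` divided by the product of the hook lengths of `γ + wp` (hook length
formula), and its `p`-part satisfies
`[dim S^{γ+wp}]_p = [n!]_p / [(wp)!]_p`, stated multiplicatively. -/
theorem stmt_5 (p : ℕ) (hp : p.Prime) (k w m n : ℕ) (hw : 0 < w) (gam : ℕ → ℕ)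
    (hanti : ∀ i j, i ≤ j → gam j ≤ gam i)
    (hsupp : ∀ i, gam i ≠ 0 ↔ i < k)
    (hcore : ∀ q ∈ cellsOf gam k, ¬ p ∣ hookLen gam k q)
    (hm : ∑ i ∈ Finset.range k, gam i = m)
    (hn : n = m + w * p) :
    let mu : ℕ → ℕ := fun i => if i = 0 then gam 0 + w * p else gam i
    let k' : ℕ := max k 1
    ppart p (n.factorial / hookProd mu k') * ppart p ((w * p).factorial)
      = ppart p n.factorial := by
  intro mu k'
  have hmu : ∀ i, mu i = if i = 0 then gam 0 + w * p else gam i := fun _ => rfl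
  have hk' : k' = max k 1 := rfl
  have hmu0 : mu 0 = gam 0 + w * p := rfl
  have hanti_mu : ∀ i j, i ≤ j → mu j ≤ mu i := by
    intro i j hij
    rw [hmu i, hmu j]
    have h1 := hanti 0 j (Nat.zero_le j)
    have h2 := hanti i j hij
    split_ifs with h h' h' <;> omega
  have hk'pos : 0 < k' := by rw [hk']; omega
  have hsum : ∑ i ∈ Finset.range k', mu i = n := by
    rcases Nat.eq_zero_or_pos k with hk | hk
    · subst hk
      have hg0 : gam 0 = 0 := by
        by_contra h
        exact absurd ((hsupp 0).mp h) (by omega)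
      have hm0 : m = 0 := by simpa using hm.symm
      have hk1 : k' = 1 := by rw [hk']; omega
      rw [hk1, Finset.sum_range_one, hmu0, hg0, hn, hm0]
    · have hkk : k' = k := by rw [hk']; omega
      rw [hkk]
      have hstep : ∀ i ∈ Finset.range k, mu i = gam i + (if i = 0 then w * p else 0) := by
        intro i _
        rw [hmu i]
        split_ifs with h
        · subst h; rfl
        · omega
      rw [Finset.sum_congr rfl hstep, Finset.sum_add_distrib, hm,
        Finset.sum_ite_eq' (Finset.range k) 0 (fun _ => w * p)]
      simp only [Finset.mem_range.mpr hk, if_true]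
      omega
  set H := hookProd mu k' with hH
  have hHdvd : H ∣ n.factorial := by
    rw [← hsum]; exact Stmt5Aux.hookProd_dvd_factorial mu k' hanti_mu
  -- conjugate parts of mu
  have c2 : ∀ j, gam 0 ≤ j → j < gam 0 + w * p → conjPart mu k' j = 1 := by
    intro j h1 h2
    have hfil : (Finset.range k').filter (fun i => j < mu i) = {0} := by
      apply Finset.eq_singleton_iff_unique_mem.mpr
      constructor
      · rw [Finset.mem_filter, Finset.mem_range, hmu0]
        exact ⟨hk'pos, h2⟩
      · intro x hx
        rw [Finset.mem_filter, Finset.mem_range] at hx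
        by_contra hx0
        rw [hmu x, if_neg hx0] at hx
        have := hanti 0 x (Nat.zero_le x)
        omega
    rw [conjPart, hfil, Finset.card_singleton]
  have c1 : ∀ j, j < gam 0 → conjPart mu k' j = conjPart gam k j := by
    intro j hj
    have hk : 0 < k := (hsupp 0).mp (by omega)
    have hkk : k' = k := by rw [hk']; omega
    rw [conjPart, conjPart, hkk]
    congr 1
    apply Finset.filter_congr
    intro i _
    rw [hmu i]
    split_ifs with h
    · subst h
      omega
    · exact Iff.rfl
  -- hook lengths of mu
  have hook_new : ∀ j, gam 0 ≤ j → j < gam 0 + w * p →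
      hookLen mu k' (0, j) = gam 0 + w * p - j := by
    intro j h1 h2
    unfold hookLen
    simp only
    rw [c2 j h1 h2, hmu0]
    omega
  have hook_old0 : ∀ j, j < gam 0 → hookLen mu k' (0, j) = hookLen gam k (0, j) + w * p := by
    intro j hj
    have hk : 0 < k := (hsupp 0).mp (by omega)
    have hcpos : 0 < conjPart gam k j := by
      apply Finset.card_pos.mpr
      exact ⟨0, by simp [Finset.mem_filter, Finset.mem_range, hk, hj]⟩
    unfold hookLen
    simp only
    rw [c1 j hj, hmu0]
    omega
  have hook_rest : ∀ i j, i ≠ 0 → j < gam i → hookLen mu k' (i, j) = hookLen gam k (i, j) := by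
    intro i j hi0 hj
    have hj0 : j < gam 0 := lt_of_lt_of_le hj (hanti 0 i (Nat.zero_le i))
    have hmi : mu i = gam i := by rw [hmu i, if_neg hi0]
    unfold hookLen
    simp only
    rw [c1 j hj0, hmi]
  -- cells of mu
  have hcells : cellsOf mu k' =
      cellsOf gam k ∪ ({0} : Finset ℕ) ×ˢ Finset.Ico (gam 0) (gam 0 + w * p) := by
    ext q
    rcases q with ⟨i, j⟩
    simp only [Stmt5Aux.mem_cellsOf, Finset.mem_union, Finset.mem_product,
      Finset.mem_singleton, Finset.mem_Ico]
    have hiffi := hsupp i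
    have hiff0 := hsupp 0
    by_cases hi : i = 0
    · subst hi
      rw [hmu0]
      constructor <;> intro h <;> [skip; skip] <;> omega
    · have e : mu i = gam i := by rw [hmu i, if_neg hi]
      rw [e]
      constructor <;> intro h <;> omega
  have hdisj : Disjoint (cellsOf gam k)
      (({0} : Finset ℕ) ×ˢ Finset.Ico (gam 0) (gam 0 + w * p)) := by
    rw [Finset.disjoint_left]
    intro q hq hq'
    rw [Stmt5Aux.mem_cellsOf] at hq
    simp only [Finset.mem_product, Finset.mem_singleton, Finset.mem_Ico] at hq'
    have h2 := hq.2
    rw [hq'.1] at h2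
    omega
  -- split the hook product
  have hnew_prod : (∏ j ∈ Finset.Ico (gam 0) (gam 0 + w * p), hookLen mu k' (0, j))
      = (w * p).factorial := by
    have e1 : ∀ j ∈ Finset.Ico (gam 0) (gam 0 + w * p),
        hookLen mu k' (0, j) = gam 0 + w * p - j := by
      intro j hj
      rw [Finset.mem_Ico] at hj
      exact hook_new j hj.1 hj.2
    rw [Finset.prod_congr rfl e1, ← Stmt5Aux.prod_Icc_one (w * p)]
    refine Finset.prod_nbij (fun j => gam 0 + w * p - j) ?_ ?_ ?_ ?_
    · intro j hj
      simp only [Finset.mem_Ico] at hj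
      simp only [Finset.mem_Icc]
      omega
    · intro a ha b hb hab
      simp only [Finset.coe_Ico, Set.mem_Ico] at ha hb
      simp only at hab
      omega
    · intro t ht
      simp only [Finset.coe_Icc, Set.mem_Icc] at ht
      refine ⟨gam 0 + w * p - t, ?_, ?_⟩
      · simp only [Finset.coe_Ico, Set.mem_Ico]; omega
      · simp only; omega
    · intro a _
      rfl
  have hsplit : H = (∏ q ∈ cellsOf gam k, hookLen mu k' q) * (w * p).factorial := by
    rw [hH, hookProd, hcells, Finset.prod_union hdisj]
    congr 1
    rw [Finset.singleton_product, Finset.prod_map, ← hnew_prod]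
    apply Finset.prod_congr rfl
    intro j _
    rfl
  -- p-part of H
  have hAnz : ¬ p ∣ (∏ q ∈ cellsOf gam k, hookLen mu k' q) := by
    intro hdvd
    obtain ⟨q, hq, hpq⟩ := hp.prime.exists_mem_finset_dvd hdvd
    have hq' := (Stmt5Aux.mem_cellsOf gam k q).mp hq
    rcases q with ⟨i, j⟩
    by_cases hi : i = 0
    · subst hi
      rw [hook_old0 j hq'.2] at hpq
      have hpw : p ∣ w * p := Dvd.intro_left w rfl
      have : p ∣ hookLen gam k (0, j) := by
        have := Nat.dvd_sub hpq hpw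
        simpa using this
      exact hcore (0, j) hq this
    · rw [hook_rest i j hi hq'.2] at hpq
      exact hcore (i, j) hq hpq
  have hA0 : (∏ q ∈ cellsOf gam k, hookLen mu k' q) ≠ 0 := by
    intro h
    exact hAnz (h ▸ dvd_zero p)
  have hH0 : H ≠ 0 := by
    rw [hsplit]
    exact mul_ne_zero hA0 (Nat.factorial_ne_zero _)
  have hfacH : H.factorization p = ((w * p).factorial).factorization p := by
    rw [hsplit, Nat.factorization_mul hA0 (Nat.factorial_ne_zero _), Finsupp.add_apply,
      Nat.factorization_eq_zero_of_not_dvd hAnz, zero_add]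
  -- wrap up
  have hn0 : n.factorial ≠ 0 := Nat.factorial_ne_zero n
  have hle : ((w * p).factorial).factorization p ≤ n.factorial.factorization p := by
    have hd : (w * p).factorial ∣ n.factorial := Nat.factorial_dvd_factorial (by omega)
    have hpow : p ^ (((w * p).factorial).factorization p) ∣ n.factorial :=
      dvd_trans (Nat.ordProj_dvd _ p) hd
    exact (Nat.Prime.pow_dvd_iff_le_factorization hp hn0).mp hpow
  have hdivfac : (n.factorial / H).factorization p
      = n.factorial.factorization p - H.factorization p := by
    rw [Nat.factorization_div hHdvd, Finsupp.tsub_apply]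
  show p ^ ((n.factorial / H).factorization p) * p ^ (((w * p).factorial).factorization p)
      = p ^ (n.factorial.factorization p)
  rw [hdivfac, hfacH, ← pow_add]
  congr 1
  omega
end

section
/- Let p be a prime and μ a partition of n with p-core γ (|γ| = m) and weight w, so n = m + wp. Then with p^a = [n!]_p and p^b = [(wp)!]_p, the p-part of dim S^μ = n!/∏ hooks(μ) satisfies [dim S^μ]_p ≥ p^{a-b}. -/
/-- A partition, as a weakly decreasing, eventually-zero sequence. -/
def IsPartitionFun (lam : ℕ → ℕ) : Prop :=
  (∀ i j, i ≤ j → lam j ≤ lam i) ∧ (∃ N, ∀ i, N ≤ i → lam i = 0)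

/-- `nu` is obtained from `mu` by removing a rim hook (border strip) of
size `p`, occupying rows `r, …, s`. -/
def IsRimHookRemoval (p : ℕ) (mu nu : ℕ → ℕ) : Prop :=
  ∃ r s, r ≤ s ∧
    (∀ i, i < r → nu i = mu i) ∧
    (∀ i, s < i → nu i = mu i) ∧
    (∀ i, r ≤ i → i ≤ s → nu i < mu i) ∧
    (∀ i, r ≤ i → i < s → nu i = mu (i + 1) - 1) ∧
    (∑ i ∈ Finset.Icc r s, (mu i - nu i)) = p

/-- `gam` is the `p`-core of `mu`, obtained by removing `w` rim `p`-hooks. -/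
inductive IsPCoreWithWeight (p : ℕ) : (ℕ → ℕ) → (ℕ → ℕ) → ℕ → Prop where
  | core (gam : ℕ → ℕ)
      (h : ∀ nu, IsPartitionFun nu → ¬ IsRimHookRemoval p gam nu) :
      IsPCoreWithWeight p gam gam 0
  | step (mu nu gam : ℕ → ℕ) (w : ℕ) (hnu : IsPartitionFun nu)
      (hrem : IsRimHookRemoval p mu nu) (hrec : IsPCoreWithWeight p nu gam w) :
      IsPCoreWithWeight p mu gam (w + 1)

/-!
Encode the first `k` rows of a partition by its β-set `B = {λ i + (k - 1 - i)}`. Its hook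
lengths are the differences `x - y` with `x ∈ B`, `y < x`, `y ∉ B`, so the number of hooks
divisible by `q` is the number of empty positions lying above a bead on the same runner of the
`q`-abacus. Summing positions runner by runner, `q` times that number is `∑ B` minus the sum of
the configuration with every bead pushed up its runner, and pushing up on a `q`-abacus costs at
least as much as on a `d`-abacus when `d ∣ q`. For `d = 1` this bounds the number by `n / q`, so
the hook product divides `n!`. For `d = p`, removing a rim `p`-hook moves one bead one step up its
`p`-runner, so the β-set of the `p`-core is the pushed-up `p`-configuration and `∑ B` exceeds its
sum by `w p`; the number of hooks divisible by `p ^ t` is then at most `w p / p ^ t`, and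
Legendre's formula gives `[∏ hooks]_p ≤ [(w p)!]_p`.
-/
namespace HookLength

open Finset

section Abacus

variable {q : ℕ}

def runnerCount (q : ℕ) (E : Finset ℕ) (r : ℕ) : ℕ := #{x ∈ E | x % q = r}

def gapsBelow (q : ℕ) (E : Finset ℕ) (x : ℕ) : ℕ := #{y ∈ range x | y ∉ E ∧ y ≡ x [MOD q]}

/-- The sum of the positions `q * j + r`, `j < c r`, `r < q`: all beads pushed to the top of
their runners. -/
def packedSum (q : ℕ) (c : ℕ → ℕ) : ℕ := ∑ r ∈ range q, (r * c r + q * (c r).choose 2)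

def packedAbacus (q : ℕ) (c : ℕ → ℕ) : Finset ℕ :=
  (range q).biUnion fun r => (range (c r)).image (q * · + r)

lemma sum_card_filter_lt (T : Finset ℕ) : ∑ t ∈ T, #{s ∈ T | s < t} = (#T).choose 2 := by
  rw [← card_product_filter_lt, card_filter, sum_product_right]
  simp only [card_filter]

lemma div_eq_gapsBelow_add_card (hq : 0 < q) (E : Finset ℕ) (x : ℕ) :
    x / q = gapsBelow q E x + #{y ∈ E | y < x ∧ y ≡ x [MOD q]} := by
  have hcount : #{y ∈ range x | y ≡ x [MOD q]} = x / q := by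
    simpa [Nat.count_eq_card_filter_range] using Nat.count_modEq_card (b := x) hq x
  rw [← hcount, ← card_filter_add_card_filter_not (p := (· ∉ E)), filter_filter, filter_filter,
    gapsBelow]
  congr 2 <;> ext y <;> simp only [mem_filter, mem_range] <;> tauto

lemma packedSum_runnerCount (hq : 0 < q) (E : Finset ℕ) :
    packedSum q (runnerCount q E)
      = ∑ x ∈ E, (x % q + q * #{y ∈ E | y < x ∧ y ≡ x [MOD q]}) := by
  rw [packedSum, ← sum_fiberwise_of_maps_to (s := E) (g := (· % q)) (t := range q)
    (fun x _ => mem_range.2 (Nat.mod_lt x hq))]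
  refine sum_congr rfl fun r _ => ?_
  rw [sum_add_distrib, ← mul_sum, runnerCount, ← sum_card_filter_lt]
  congr 1
  · rw [sum_congr rfl fun x hx => (mem_filter.1 hx).2, sum_const, smul_eq_mul, mul_comm]
  · congr 1
    refine sum_congr rfl fun x hx => ?_
    rw [filter_filter]
    congr 1
    ext y
    simp only [mem_filter, Nat.ModEq, (mem_filter.1 hx).2]
    tauto

lemma sum_eq_mul_sum_gapsBelow_add_packedSum (hq : 0 < q) (E : Finset ℕ) :
    ∑ x ∈ E, x = q * ∑ x ∈ E, gapsBelow q E x + packedSum q (runnerCount q E) := by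
  rw [packedSum_runnerCount hq, mul_sum, ← sum_add_distrib]
  refine sum_congr rfl fun x _ => ?_
  have := Nat.div_add_mod x q
  rw [div_eq_gapsBelow_add_card hq E x] at this
  linarith

lemma packedSum_le_sum (hq : 0 < q) (E : Finset ℕ) :
    packedSum q (runnerCount q E) ≤ ∑ x ∈ E, x := by
  rw [sum_eq_mul_sum_gapsBelow_add_packedSum hq E]
  exact Nat.le_add_left _ _

lemma mem_of_add_mul_mem {C : Finset ℕ} (hcl : ∀ x ∈ C, q ≤ x → x - q ∈ C) (y : ℕ) :
    ∀ m, y + q * m ∈ C → y ∈ C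
  | 0, h => by simpa using h
  | m + 1, h => mem_of_add_mul_mem hcl y m <| by
      simpa [mul_add, ← add_assoc] using hcl _ h (by rw [mul_add]; omega)

lemma gapsBelow_eq_zero_of_closed {C : Finset ℕ} (hcl : ∀ x ∈ C, q ≤ x → x - q ∈ C)
    {x : ℕ} (hx : x ∈ C) : gapsBelow q C x = 0 := by
  refine card_eq_zero.2 (filter_eq_empty_iff.2 fun y hy ⟨hyC, hyx⟩ => hyC ?_)
  have hlt := mem_range.1 hy
  obtain ⟨m, hm⟩ := (Nat.modEq_iff_dvd' hlt.le).1 hyx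
  exact mem_of_add_mul_mem hcl y m (by rw [← hm, Nat.add_sub_cancel' hlt.le]; exact hx)

lemma sum_eq_packedSum_of_closed (hq : 0 < q) {C : Finset ℕ}
    (hcl : ∀ x ∈ C, q ≤ x → x - q ∈ C) : ∑ x ∈ C, x = packedSum q (runnerCount q C) := by
  rw [sum_eq_mul_sum_gapsBelow_add_packedSum hq C,
    sum_eq_zero fun x hx => gapsBelow_eq_zero_of_closed hcl hx, mul_zero, zero_add]

lemma mem_packedAbacus {c : ℕ → ℕ} {x : ℕ} :
    x ∈ packedAbacus q c ↔ ∃ r < q, ∃ j < c r, q * j + r = x := by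
  simp [packedAbacus]

lemma packedAbacus_closed (c : ℕ → ℕ) :
    ∀ x ∈ packedAbacus q c, q ≤ x → x - q ∈ packedAbacus q c := by
  simp only [mem_packedAbacus]
  rintro _ ⟨r, hr, j, hj, rfl⟩ hx
  obtain _ | j := j
  · omega
  · exact ⟨r, hr, j, by omega, by rw [mul_add]; omega⟩

lemma runnerCount_packedAbacus (c : ℕ → ℕ) {r : ℕ} (hr : r < q) :
    runnerCount q (packedAbacus q c) r = c r := by
  have hq : 0 < q := by omega
  have himage : {x ∈ packedAbacus q c | x % q = r} = (range (c r)).image (q * · + r) := by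
    ext x
    simp only [mem_filter, mem_packedAbacus, mem_image, mem_range]
    constructor
    · rintro ⟨⟨r', hr', j, hj, rfl⟩, hmod⟩
      rw [mul_comm, Nat.mul_add_mod_of_lt hr'] at hmod
      exact ⟨j, hmod ▸ hj, by rw [hmod]⟩
    · rintro ⟨j, hj, rfl⟩
      exact ⟨⟨r, hr, j, hj, rfl⟩, by rw [mul_comm, Nat.mul_add_mod_of_lt hr]⟩
  rw [runnerCount, himage, card_image_of_injective _ fun a b hab => by
    simpa [hq.ne'] using hab, card_range]

lemma runnerCount_eq_sum_of_dvd {d : ℕ} (hq : 0 < q) (hdq : d ∣ q) (E : Finset ℕ) (r : ℕ) :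
    runnerCount d E r = ∑ r' ∈ range q with r' % d = r, runnerCount q E r' := by
  rw [runnerCount, card_eq_sum_card_fiberwise (f := (· % q)) fun x hx => ?_]
  · refine sum_congr rfl fun r' hr' => ?_
    rw [runnerCount, filter_filter]
    congr 1
    ext x
    simp only [mem_filter] at hr' ⊢
    constructor
    · exact fun ⟨hx, _, h⟩ => ⟨hx, h⟩
    · rintro ⟨hx, h⟩
      exact ⟨hx, by rw [← Nat.mod_mod_of_dvd x hdq, h, hr'.2], h⟩
  · simp only [coe_filter, mem_range, Set.mem_ofPred_eq] at hx ⊢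
    exact ⟨Nat.mod_lt x hq, by rw [Nat.mod_mod_of_dvd x hdq, hx.2]⟩

lemma packedSum_le_packedSum_of_dvd {d : ℕ} (hq : 0 < q) (hdq : d ∣ q) (E : Finset ℕ) :
    packedSum d (runnerCount d E) ≤ packedSum q (runnerCount q E) := by
  set D := packedAbacus q (runnerCount q E)
  have hD : ∀ r ∈ range q, runnerCount q D r = runnerCount q E r :=
    fun r hr => runnerCount_packedAbacus _ (mem_range.1 hr)
  have hdD : runnerCount d D = runnerCount d E := funext fun r => by
    rw [runnerCount_eq_sum_of_dvd hq hdq, runnerCount_eq_sum_of_dvd hq hdq]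
    exact sum_congr rfl fun r' hr' => hD r' (mem_filter.1 hr').1
  calc packedSum d (runnerCount d E) = packedSum d (runnerCount d D) := by rw [hdD]
    _ ≤ ∑ x ∈ D, x := packedSum_le_sum (Nat.pos_of_dvd_of_pos hdq hq) D
    _ = packedSum q (runnerCount q D) := sum_eq_packedSum_of_closed hq (packedAbacus_closed _)
    _ = packedSum q (runnerCount q E) := sum_congr rfl fun r hr => by rw [hD r hr]

lemma mul_sum_gapsBelow_add_packedSum_le {d : ℕ} (hq : 0 < q) (hdq : d ∣ q) (E : Finset ℕ) :
    q * ∑ x ∈ E, gapsBelow q E x + packedSum d (runnerCount d E) ≤ ∑ x ∈ E, x := by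
  rw [sum_eq_mul_sum_gapsBelow_add_packedSum hq E]
  have := packedSum_le_packedSum_of_dvd hq hdq E
  omega

lemma packedSum_one_runnerCount (E : Finset ℕ) : packedSum 1 (runnerCount 1 E) = (#E).choose 2 := by
  simp [packedSum, runnerCount, Nat.mod_one]

end Abacus

def hookPairs (E : Finset ℕ) : Finset ((_ : ℕ) × ℕ) := E.sigma fun x => {y ∈ range x | y ∉ E}

lemma sub_ne_zero_of_mem_hookPairs {E : Finset ℕ} {z : (_ : ℕ) × ℕ} (hz : z ∈ hookPairs E) :
    z.1 - z.2 ≠ 0 := by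
  simp only [hookPairs, mem_sigma, mem_filter, mem_range] at hz
  omega

lemma card_filter_dvd_hookPairs (q : ℕ) (E : Finset ℕ) :
    #{z ∈ hookPairs E | q ∣ z.1 - z.2} = ∑ x ∈ E, gapsBelow q E x := by
  rw [hookPairs, filter_sigma, card_sigma]
  refine sum_congr rfl fun x _ => ?_
  rw [gapsBelow, filter_filter]
  refine congrArg card (filter_congr fun y hy => ?_)
  rw [(Nat.modEq_iff_dvd' (mem_range.1 hy).le)]

lemma factorization_prod_le_factorization_factorial {ι : Type*} {l N : ℕ} (hl : l.Prime)
    {s : Finset ι} {d : ι → ℕ} (hd : ∀ i ∈ s, d i ≠ 0)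
    (h : ∀ t, 1 ≤ t → l ^ t * #{i ∈ s | l ^ t ∣ d i} ≤ N) :
    (∏ i ∈ s, d i).factorization l ≤ N.factorial.factorization l := by
  set b := N + ∑ i ∈ s, d i + 1
  have hb : ∀ i ∈ s, d i < l ^ b := fun i hi =>
    ((single_le_sum (fun _ _ => Nat.zero_le _) hi).trans_lt (by omega)).trans
      (Nat.lt_pow_self hl.one_lt)
  rw [Nat.factorization_factorial hl (b := b) ((Nat.log_le_self l N).trans_lt (by omega)),
    Nat.factorization_prod hd, sum_apply']
  calc ∑ i ∈ s, (d i).factorization l = ∑ i ∈ s, #{t ∈ Ico 1 b | l ^ t ∣ d i} :=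
        sum_congr rfl fun i hi =>
          Nat.factorization_eq_card_pow_dvd_of_lt hl (Nat.pos_of_ne_zero (hd i hi)) (hb i hi)
    _ = ∑ t ∈ Ico 1 b, #{i ∈ s | l ^ t ∣ d i} := by simp only [card_filter]; exact sum_comm
    _ ≤ ∑ t ∈ Ico 1 b, N / l ^ t := sum_le_sum fun t ht =>
        (Nat.le_div_iff_mul_le (pow_pos hl.pos t)).2 <| by
          rw [mul_comm]; exact h t (mem_Ico.1 ht).1

section BetaSet

variable (lam : ℕ → ℕ) (k : ℕ)

def beta (i : ℕ) : ℕ := lam i + (k - 1 - i)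

def betaSet : Finset ℕ := (range k).image (beta lam k)

/-- The position outside `betaSet lam k` that corresponds to column `j` of `lam`. -/
def columnGap (j : ℕ) : ℕ := j + (k - conjPart lam k j)

variable {lam k}

@[simp]
lemma mem_betaSet {x : ℕ} : x ∈ betaSet lam k ↔ ∃ i < k, beta lam k i = x := by
  simp [betaSet]

lemma beta_lt_beta (hlam : Antitone lam) {i j : ℕ} (hij : i < j) (hj : j < k) :
    beta lam k j < beta lam k i := by
  have := hlam hij.le
  unfold beta
  omega

lemma beta_injOn (hlam : Antitone lam) : Set.InjOn (beta lam k) (range k) := by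
  intro i hi j hj h
  simp only [coe_range, Set.mem_Iio] at hi hj
  rcases lt_trichotomy i j with hij | rfl | hij
  · exact absurd h (beta_lt_beta hlam hij hj).ne'
  · rfl
  · exact absurd h (beta_lt_beta hlam hij hi).ne

lemma card_betaSet (hlam : Antitone lam) : #(betaSet lam k) = k := by
  rw [betaSet, card_image_of_injOn (beta_injOn hlam), card_range]

lemma sum_betaSet (hlam : Antitone lam) :
    ∑ x ∈ betaSet lam k, x = ∑ i ∈ range k, lam i + k.choose 2 := by
  rw [betaSet, sum_image (beta_injOn hlam)]
  simp only [beta]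
  rw [sum_add_distrib, sum_range_reflect (fun i => i) k, sum_range_id, Nat.choose_two_right]

lemma conjPart_le (j : ℕ) : conjPart lam k j ≤ k :=
  (card_filter_le _ _).trans (card_range k).le

lemma lt_conjPart (hlam : Antitone lam) {i j : ℕ} (hi : i < k) (hj : j < lam i) :
    i < conjPart lam k j := by
  have hsub : range (i + 1) ⊆ {i' ∈ range k | j < lam i'} := fun i' hi' => by
    simp only [mem_range, mem_filter] at hi' ⊢
    exact ⟨by omega, hj.trans_le (hlam (by omega))⟩
  simpa [conjPart] using card_le_card hsub

lemma conjPart_le_of_le (hlam : Antitone lam) {i j : ℕ} (hj : lam i ≤ j) :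
    conjPart lam k j ≤ i := by
  have hsub : {i' ∈ range k | j < lam i'} ⊆ range i := fun i' hi' => by
    simp only [mem_range, mem_filter] at hi' ⊢
    by_contra h
    exact absurd (hlam (not_lt.1 h)) (by omega)
  simpa [conjPart] using card_le_card hsub

lemma conjPart_anti : Antitone (conjPart lam k) := fun _ _ hjj =>
  card_le_card <| monotone_filter_right _ fun _ _ h => hjj.trans_lt h

lemma columnGap_strictMono : StrictMono (columnGap lam k) := fun j j' h => by
  have := conjPart_anti (lam := lam) (k := k) h.le
  have := conjPart_le (lam := lam) (k := k) j
  unfold columnGap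
  omega

lemma columnGap_notMem (hlam : Antitone lam) (j : ℕ) : columnGap lam k j ∉ betaSet lam k := by
  rintro hj
  obtain ⟨i, hi, heq⟩ := mem_betaSet.1 hj
  have := conjPart_le (lam := lam) (k := k) j
  unfold beta columnGap at heq
  rcases lt_or_ge j (lam i) with h | h
  · have := lt_conjPart hlam hi h
    omega
  · have := conjPart_le_of_le (k := k) hlam h
    omega

lemma hookLen_add_columnGap (hlam : Antitone lam) {i j : ℕ} (hi : i < k) (hj : j < lam i) :
    hookLen lam k (i, j) + columnGap lam k j = beta lam k i := by
  have := lt_conjPart hlam hi hj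
  have := conjPart_le (lam := lam) (k := k) j
  dsimp only [hookLen, columnGap, beta]
  omega

lemma beta_lt_columnGap (hlam : Antitone lam) {i j : ℕ} (hi : i < k) (hj : lam i ≤ j) :
    beta lam k i < columnGap lam k j := by
  have := conjPart_le_of_le (k := k) hlam hj
  unfold beta columnGap
  omega

/-- The β-numbers and the column gaps fill `range (lam 0 + k)`. -/
lemma exists_columnGap_eq (hlam : Antitone lam) {y : ℕ} (hy : y < lam 0 + k)
    (hyB : y ∉ betaSet lam k) : ∃ j, columnGap lam k j = y := by
  set G := (range (lam 0)).image (columnGap lam k)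
  have hsub : betaSet lam k ∪ G ⊆ range (lam 0 + k) := by
    refine union_subset (fun x hx => ?_) (fun x hx => ?_)
    · obtain ⟨i, hi, rfl⟩ := mem_betaSet.1 hx
      have := hlam (Nat.zero_le i)
      simp only [mem_range, beta]
      omega
    · obtain ⟨j, hj, rfl⟩ := mem_image.1 hx
      simp only [mem_range, columnGap] at hj ⊢
      omega
  have hcard : #(betaSet lam k ∪ G) = lam 0 + k := by
    rw [card_union_of_disjoint (disjoint_right.2 fun x hx => ?_), card_betaSet hlam,
      card_image_of_injective _ columnGap_strictMono.injective, card_range, add_comm]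
    obtain ⟨j, -, rfl⟩ := mem_image.1 hx
    exact columnGap_notMem hlam j
  have hy' : y ∈ betaSet lam k ∪ G := by
    rw [eq_of_subset_of_card_le hsub (by rw [hcard, card_range])]
    exact mem_range.2 hy
  obtain ⟨j, -, hj⟩ := mem_image.1 ((mem_union.1 hy').resolve_left hyB)
  exact ⟨j, hj⟩

lemma columnGap_lt_beta (hlam : Antitone lam) {i j : ℕ} (hi : i < k) (hj : j < lam i) :
    columnGap lam k j < beta lam k i := by
  have := lt_conjPart hlam hi hj
  unfold beta columnGap
  omega

lemma mem_cellsOf {a : ℕ × ℕ} : a ∈ cellsOf lam k ↔ a.1 < k ∧ a.2 < lam a.1 := by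
  obtain ⟨i, j⟩ := a
  simp [cellsOf]

lemma hookProd_eq_prod_hookPairs (hlam : Antitone lam) :
    hookProd lam k = ∏ z ∈ hookPairs (betaSet lam k), (z.1 - z.2) := by
  refine prod_bij (fun a _ => ⟨beta lam k a.1, columnGap lam k a.2⟩) ?_ ?_ ?_ ?_
  · intro a ha
    obtain ⟨hi, hj⟩ := mem_cellsOf.1 ha
    simp only [hookPairs, mem_sigma, mem_filter, mem_range]
    exact ⟨mem_betaSet.2 ⟨a.1, hi, rfl⟩, columnGap_lt_beta hlam hi hj, columnGap_notMem hlam _⟩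
  · intro a ha b hb hab
    obtain ⟨hai, -⟩ := mem_cellsOf.1 ha
    obtain ⟨hbi, -⟩ := mem_cellsOf.1 hb
    simp only [Sigma.mk.inj_iff, heq_eq_eq] at hab
    exact Prod.ext (beta_injOn hlam (by simpa using hai) (by simpa using hbi) hab.1)
      (columnGap_strictMono.injective hab.2)
  · rintro ⟨x, y⟩ hz
    simp only [hookPairs, mem_sigma, mem_filter, mem_range] at hz
    obtain ⟨hx, hyx, hyB⟩ := hz
    obtain ⟨i, hi, rfl⟩ := mem_betaSet.1 hx
    have hy : y < lam 0 + k := by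
      have := hlam (Nat.zero_le i)
      unfold beta at hyx
      omega
    obtain ⟨j, rfl⟩ := exists_columnGap_eq hlam hy hyB
    have hj : j < lam i := by
      by_contra h
      exact absurd (beta_lt_columnGap hlam hi (not_lt.1 h)) (not_lt.2 hyx.le)
    exact ⟨(i, j), mem_cellsOf.2 ⟨hi, hj⟩, rfl⟩
  · rintro ⟨i, j⟩ ha
    obtain ⟨hi, hj⟩ : i < k ∧ j < lam i := mem_cellsOf.1 ha
    have := hookLen_add_columnGap hlam hi hj
    show hookLen lam k (i, j) = beta lam k i - columnGap lam k j
    omega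

end BetaSet

section RimHook

variable {k p : ℕ} {mu nu : ℕ → ℕ}

lemma sum_Icc_add_eq_of_shift (f g : ℕ → ℕ) {r s : ℕ} (hrs : r ≤ s)
    (h : ∀ i, r ≤ i → i < s → g i = f (i + 1)) :
    ∑ i ∈ Icc r s, f i + g s = ∑ i ∈ Icc r s, g i + f r := by
  induction s, hrs using Nat.le_induction with
  | base => simp [add_comm]
  | succ s hrs ih =>
    rw [sum_Icc_succ_top (by omega), sum_Icc_succ_top (by omega)]
    have := ih fun i h1 h2 => h i h1 (by omega)
    have := h s hrs (by omega)
    omega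

lemma sum_sub_add_beta_eq {r s : ℕ} (hrs : r ≤ s) (hle : ∀ i, r ≤ i → i ≤ s → nu i ≤ mu i)
    (hshift : ∀ i, r ≤ i → i < s → beta nu k i = beta mu k (i + 1)) :
    ∑ i ∈ Icc r s, (mu i - nu i) + beta nu k s = beta mu k r := by
  have htel := sum_Icc_add_eq_of_shift (beta mu k) (beta nu k) hrs hshift
  have hpt : ∑ i ∈ Icc r s, beta mu k i = ∑ i ∈ Icc r s, (beta nu k i + (mu i - nu i)) :=
    sum_congr rfl fun i hi => by
      have := hle i (mem_Icc.1 hi).1 (mem_Icc.1 hi).2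
      unfold beta
      omega
  rw [hpt, sum_add_distrib] at htel
  omega

lemma betaSet_eq_insert_erase_of_shift (hmu : Antitone mu) {r s : ℕ} (hrs : r ≤ s) (hsk : s < k)
    (hlow : ∀ i < r, beta nu k i = beta mu k i) (hhigh : ∀ i, s < i → beta nu k i = beta mu k i)
    (hshift : ∀ i, r ≤ i → i < s → beta nu k i = beta mu k (i + 1)) :
    betaSet nu k = insert (beta nu k s) ((betaSet mu k).erase (beta mu k r)) := by
  have hne : ∀ j < k, j ≠ r → beta mu k j ≠ beta mu k r := fun j hj hjr h =>
    hjr (beta_injOn hmu (by simpa using hj) (by simpa using hrs.trans_lt hsk) h)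
  ext y
  simp only [mem_insert, mem_erase, mem_betaSet]
  constructor
  · rintro ⟨i, hi, rfl⟩
    rcases lt_trichotomy i s with his | rfl | his
    · right
      rcases lt_or_ge i r with hir | hri
      · rw [hlow i hir]
        exact ⟨hne i hi hir.ne, i, hi, rfl⟩
      · rw [hshift i hri his]
        exact ⟨hne (i + 1) (by omega) (by omega), i + 1, by omega, rfl⟩
    · exact .inl rfl
    · right
      rw [hhigh i his]
      exact ⟨hne i hi (by omega), i, hi, rfl⟩
  · rintro (rfl | ⟨hir, i, hi, rfl⟩)
    · exact ⟨s, hsk, rfl⟩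
    · have hir : i ≠ r := fun h => hir (h ▸ rfl)
      rcases lt_or_gt_of_ne hir with hir | hri
      · exact ⟨i, hi, hlow i hir⟩
      rcases le_or_gt i s with his | his
      · refine ⟨i - 1, by omega, ?_⟩
        rw [hshift (i - 1) (by omega) (by omega), Nat.sub_add_cancel (by omega)]
      · exact ⟨i, hi, hhigh i his⟩

lemma betaSet_eq_of_isRimHookRemoval (hmu : Antitone mu) (hmu0 : ∀ i, k ≤ i → mu i = 0)
    (hnu : Antitone nu) (hrem : IsRimHookRemoval p mu nu) :
    ∃ x ∈ betaSet mu k, p ≤ x ∧ x - p ∉ betaSet mu k ∧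
      betaSet nu k = insert (x - p) ((betaSet mu k).erase x) := by
  obtain ⟨r, s, hrs, hlow, hhigh, hmid, hstep, hsum⟩ := hrem
  have hsk : s < k := by
    by_contra h
    have := hmid s hrs le_rfl
    rw [hmu0 s (not_lt.1 h)] at this
    omega
  have hshift : ∀ i, r ≤ i → i < s → beta nu k i = beta mu k (i + 1) := fun i h1 h2 => by
    have := hstep i h1 h2
    have := hmid (i + 1) (by omega) (by omega)
    unfold beta
    omega
  have hlast : beta nu k s + p = beta mu k r := by
    rw [← hsum]
    have := sum_sub_add_beta_eq hrs (fun i h1 h2 => (hmid i h1 h2).le) hshift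
    omega
  have hgap : ∀ i < k, beta mu k i ≠ beta nu k s := fun i hi => by
    rcases le_or_gt i s with h | h
    · have := hmu h
      have := hmid s hrs le_rfl
      unfold beta
      omega
    · rw [beta, ← hhigh i h]
      exact (beta_lt_beta hnu h hi).ne
  refine ⟨beta mu k r, mem_betaSet.2 ⟨r, by omega, rfl⟩, by omega, fun hmem => ?_, ?_⟩
  · obtain ⟨i, hi, heq⟩ := mem_betaSet.1 hmem
    exact hgap i hi (by omega)
  · rw [show beta mu k r - p = beta nu k s by omega]
    exact betaSet_eq_insert_erase_of_shift hmu hrs hsk (fun i h => by rw [beta, beta, hlow i h])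
      (fun i h => by rw [beta, beta, hhigh i h]) hshift

lemma exists_isRimHookRemoval_of_lt {gam : ℕ → ℕ} (hg : Antitone gam)
    (hg0 : ∀ i, k ≤ i → gam i = 0) {r s y : ℕ} (hrs : r ≤ s) (hsk : s < k)
    (hys : y < beta gam k s) (hsy : gam (s + 1) + (k - 1 - s) ≤ y) :
    ∃ nu, IsPartitionFun nu ∧ IsRimHookRemoval (beta gam k r - y) gam nu := by
  have hys' : y < gam s + (k - 1 - s) := hys
  set nu : ℕ → ℕ := fun i =>
    if i < r then gam i else if i < s then gam (i + 1) - 1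
    else if i = s then y - (k - 1 - s) else gam i with hnu
  have hnu_anti : Antitone nu := antitone_nat_of_succ_le fun i => by
    have h1 : gam (i + 1) ≤ gam i := hg (by omega)
    have h2 : gam (i + 1 + 1) ≤ gam (i + 1) := hg (by omega)
    simp only [hnu]
    split_ifs <;> subst_vars <;> omega
  have hpos : ∀ i, i ≤ s → 1 ≤ gam i := fun i h => by
    have := hg h
    omega
  have hmid : ∀ i, r ≤ i → i ≤ s → nu i < gam i := fun i h1 h2 => by
    have := hpos (i + 1)
    have : gam (i + 1) ≤ gam i := hg (by omega)
    simp only [hnu]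
    split_ifs <;> subst_vars <;> omega
  have hshift : ∀ i, r ≤ i → i < s → beta nu k i = beta gam k (i + 1) := fun i h1 h2 => by
    have := hpos (i + 1) h2
    simp only [beta, hnu]
    split_ifs <;> omega
  have hnus : beta nu k s = y := by
    simp only [beta, hnu]
    split_ifs <;> omega
  have hsum := sum_sub_add_beta_eq hrs (fun i h1 h2 => (hmid i h1 h2).le) hshift
  refine ⟨nu, ⟨hnu_anti, k, fun i hi => ?_⟩, r, s, hrs, fun i h => ?_, fun i h => ?_, hmid,
    fun i h1 h2 => ?_, by omega⟩ <;> simp only [hnu]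
  · have := hg0 i hi
    split_ifs <;> omega
  all_goals split_ifs <;> omega

lemma exists_last_of_lt {P : ℕ → Prop} [DecidablePred P] {r k : ℕ} (hr : r < k) (hP : P r) :
    ∃ s, r ≤ s ∧ s < k ∧ P s ∧ ∀ i, s < i → i < k → ¬ P i :=
  ⟨Nat.findGreatest P (k - 1), Nat.le_findGreatest (by omega) hP,
    (Nat.findGreatest_le (k - 1)).trans_lt (by omega), Nat.findGreatest_spec (by omega) hP,
    fun _ hi hik => Nat.findGreatest_is_greatest hi (by omega)⟩

/-- The border strip runs from the row of `x` down to the last row whose β-number exceeds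
`x - p`. -/
lemma exists_isRimHookRemoval (hp : 0 < p) {gam : ℕ → ℕ} (hg : Antitone gam)
    (hg0 : ∀ i, k ≤ i → gam i = 0) {x : ℕ} (hx : x ∈ betaSet gam k) (hpx : p ≤ x)
    (hgap : x - p ∉ betaSet gam k) : ∃ nu, IsPartitionFun nu ∧ IsRimHookRemoval p gam nu := by
  obtain ⟨r, hrk, rfl⟩ := mem_betaSet.1 hx
  obtain ⟨s, hrs, hsk, hys, hlast⟩ :=
    exists_last_of_lt (P := fun i => beta gam k r - p < beta gam k i) hrk (by omega)
  have hsy : gam (s + 1) + (k - 1 - s) ≤ beta gam k r - p := by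
    rcases lt_or_ge (s + 1) k with h | h
    · have := hlast (s + 1) (by omega) h
      have : beta gam k (s + 1) ≠ beta gam k r - p := fun h' => hgap (mem_betaSet.2 ⟨_, h, h'⟩)
      unfold beta at *
      omega
    · rw [hg0 _ h]
      omega
  simpa [Nat.sub_sub_self hpx] using exists_isRimHookRemoval_of_lt hg hg0 hrs hsk hys hsy

variable {w : ℕ} {gam : ℕ → ℕ}

lemma _root_.IsRimHookRemoval.le (h : IsRimHookRemoval p mu nu) (i : ℕ) : nu i ≤ mu i := by
  obtain ⟨r, s, -, hlow, hhigh, hmid, -⟩ := h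
  rcases lt_or_ge i r with h1 | h1
  · exact (hlow i h1).le
  rcases lt_or_ge s i with h2 | h2
  · exact (hhigh i h2).le
  · exact (hmid i h1 h2).le

lemma runnerCount_insert_sub_erase {E : Finset ℕ} {x : ℕ} (hx : x ∈ E) (hpx : p ≤ x)
    (hgap : x - p ∉ E) : runnerCount p (insert (x - p) (E.erase x)) = runnerCount p E := by
  funext r
  have hmod : (x - p) % p = x % p := (Nat.mod_eq_sub_mod hpx).symm
  rw [runnerCount, runnerCount, filter_insert, filter_erase]
  split_ifs with h
  · have hxr : x ∈ {y ∈ E | y % p = r} := mem_filter.2 ⟨hx, hmod ▸ h⟩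
    rw [card_insert_of_notMem fun hm => hgap (mem_filter.1 (mem_of_mem_erase hm)).1,
      card_erase_add_one hxr]
  · have hxr : x ∉ {y ∈ E | y % p = r} := fun hm => h (hmod.trans (mem_filter.1 hm).2)
    rw [erase_eq_of_notMem hxr]

lemma sum_insert_sub_erase {E : Finset ℕ} {x : ℕ} (hx : x ∈ E) (hpx : p ≤ x) (hgap : x - p ∉ E) :
    ∑ y ∈ insert (x - p) (E.erase x), y + p = ∑ y ∈ E, y := by
  rw [sum_insert fun h => hgap (mem_of_mem_erase h), ← add_sum_erase _ _ hx]
  omega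

lemma _root_.IsPCoreWithWeight.runnerCount_betaSet_and_sum (hcore : IsPCoreWithWeight p mu gam w)
    (hmu : Antitone mu) (hmu0 : ∀ i, k ≤ i → mu i = 0) :
    runnerCount p (betaSet mu k) = runnerCount p (betaSet gam k) ∧
      ∑ x ∈ betaSet mu k, x = ∑ x ∈ betaSet gam k, x + w * p := by
  induction hcore with
  | core => simp
  | step mu nu gam w hnu hrem _ ih =>
    obtain ⟨x, hx, hpx, hgap, heq⟩ := betaSet_eq_of_isRimHookRemoval hmu hmu0 hnu.1 hrem
    obtain ⟨ihc, ihs⟩ := ih hnu.1 fun i hi => Nat.eq_zero_of_le_zero (hmu0 i hi ▸ hrem.le i)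
    rw [heq] at ihc ihs
    have := sum_insert_sub_erase hx hpx hgap
    refine ⟨by rw [← ihc, runnerCount_insert_sub_erase hx hpx hgap], ?_⟩
    rw [add_mul, one_mul]
    omega

lemma _root_.IsPCoreWithWeight.betaSet_closed (hp : 0 < p) (hcore : IsPCoreWithWeight p mu gam w)
    (hmu : Antitone mu) (hmu0 : ∀ i, k ≤ i → mu i = 0) :
    ∀ x ∈ betaSet gam k, p ≤ x → x - p ∈ betaSet gam k := by
  induction hcore with
  | core gam hno =>
    intro x hx hpx
    by_contra hgap
    obtain ⟨nu, hnu, hrem⟩ := exists_isRimHookRemoval hp hmu hmu0 hx hpx hgap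
    exact hno nu hnu hrem
  | step mu nu gam w hnu hrem _ ih =>
    exact ih hnu.1 fun i hi => Nat.eq_zero_of_le_zero (hmu0 i hi ▸ hrem.le i)

end RimHook

lemma hookProd_ne_zero {lam : ℕ → ℕ} {k : ℕ} (hlam : Antitone lam) : hookProd lam k ≠ 0 := by
  rw [hookProd_eq_prod_hookPairs hlam, prod_ne_zero_iff]
  exact fun _ => sub_ne_zero_of_mem_hookPairs

lemma hookProd_dvd_factorial {lam : ℕ → ℕ} {k : ℕ} (hlam : Antitone lam) :
    hookProd lam k ∣ (∑ i ∈ range k, lam i).factorial := by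
  rw [← Nat.factorization_le_iff_dvd (hookProd_ne_zero hlam) (Nat.factorial_ne_zero _)]
  intro l
  by_cases hl : l.Prime
  · rw [hookProd_eq_prod_hookPairs hlam]
    refine factorization_prod_le_factorization_factorial hl (fun _ => sub_ne_zero_of_mem_hookPairs)
      fun t _ => ?_
    rw [card_filter_dvd_hookPairs]
    have := mul_sum_gapsBelow_add_packedSum_le (pow_pos hl.pos t) (one_dvd _) (betaSet lam k)
    rw [packedSum_one_runnerCount, card_betaSet hlam, sum_betaSet hlam] at this
    omega
  · simp [Nat.factorization_eq_zero_of_not_prime _ hl]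

lemma _root_.IsPCoreWithWeight.factorization_hookProd_le {p k w : ℕ} {mu gam : ℕ → ℕ} (hp : p.Prime)
    (hcore : IsPCoreWithWeight p mu gam w) (hmu : Antitone mu) (hmu0 : ∀ i, k ≤ i → mu i = 0) :
    (hookProd mu k).factorization p ≤ (w * p).factorial.factorization p := by
  obtain ⟨hcnt, hsum⟩ := hcore.runnerCount_betaSet_and_sum hmu hmu0
  have hcl := hcore.betaSet_closed hp.pos hmu hmu0
  rw [hookProd_eq_prod_hookPairs hmu]
  refine factorization_prod_le_factorization_factorial hp (fun _ => sub_ne_zero_of_mem_hookPairs)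
    fun t ht => ?_
  rw [card_filter_dvd_hookPairs]
  have := mul_sum_gapsBelow_add_packedSum_le (pow_pos hp.pos t) (dvd_pow_self p (by omega))
    (betaSet mu k)
  rw [hcnt, ← sum_eq_packedSum_of_closed hp.pos hcl] at this
  omega

end HookLength

open HookLength

theorem stmt_6_general (p : ℕ) (hp : p.Prime) (n k w : ℕ) (mu gam : ℕ → ℕ)
    (hanti : ∀ i j, i ≤ j → mu j ≤ mu i)
    (hsupp : ∀ i, mu i ≠ 0 ↔ i < k)
    (hsumn : ∑ i ∈ Finset.range k, mu i = n)
    (hcore : IsPCoreWithWeight p mu gam w) :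
    ppart p n.factorial
      ≤ ppart p (n.factorial / hookProd mu k) * ppart p ((w * p).factorial) := by
  have hmu0 : ∀ i, k ≤ i → mu i = 0 := fun i hi => by
    by_contra h
    exact absurd ((hsupp i).1 h) (by omega)
  have hdvd : hookProd mu k ∣ n.factorial := hsumn ▸ hookProd_dvd_factorial hanti
  have hle_n : (hookProd mu k).factorization p ≤ n.factorial.factorization p :=
    (Nat.factorization_le_iff_dvd (hookProd_ne_zero hanti) (Nat.factorial_ne_zero n)).2 hdvd p
  have hle_wp := hcore.factorization_hookProd_le hp hanti hmu0
  rw [ppart, ppart, ppart, ← pow_add, Nat.factorization_div hdvd, Finsupp.tsub_apply]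
  exact Nat.pow_le_pow_right hp.pos (by omega)

/-- Let `p` be a prime and `mu` a partition of `n` with `p`-core
`gam` (a partition of `m`) and weight `w`, so `n = m + wp`.  With
`p^a = [n!]_p` and `p^b = [(wp)!]_p`, the `p`-part of
`dim S^mu = n! / ∏ hooks(mu)` (hook length formula) satisfies
`[dim S^mu]_p ≥ p^{a-b}`, stated multiplicatively as
`p^a ≤ [dim S^mu]_p · p^b`. -/
theorem stmt_6 (p : ℕ) (hp : p.Prime) (n k m w : ℕ) (mu gam : ℕ → ℕ)
    (hanti : ∀ i j, i ≤ j → mu j ≤ mu i)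
    (hsupp : ∀ i, mu i ≠ 0 ↔ i < k)
    (hsumn : ∑ i ∈ Finset.range k, mu i = n)
    (hgam : IsPartitionFun gam)
    (hsumm : ∑ i ∈ Finset.range n, gam i = m)
    (hcore : IsPCoreWithWeight p mu gam w)
    (hn : n = m + w * p) :
    ppart p n.factorial
      ≤ ppart p (n.factorial / hookProd mu k) * ppart p ((w * p).factorial) :=
  stmt_6_general p hp n k w mu gam hanti hsupp hsumn hcore
end

section
/- Let t be the greatest λ-tableau in the dominance order (row j of t consists of the entries λ_1+...+λ_{j-1}+1, ..., λ_1+...+λ_j). If s is a standard λ-tableau such that, for every j, the entries of row j of t occupy pairwise distinct columns of s, then s = t. -/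
/-- The row, in the greatest `lam`-tableau `t` in the dominance order, of the
entry `m ∈ {0,…,n-1}`: row `j` of `t` consists of the entries
`λ_0 + ⋯ + λ_{j-1}, …, λ_0 + ⋯ + λ_j - 1` (0-indexed). -/
def rowIdx (lam : ℕ → ℕ) (n m : ℕ) : ℕ :=
  ((Finset.range n).filter (fun j => ∑ i ∈ Finset.range (j + 1), lam i ≤ m)).card

/-- The column, in the greatest `lam`-tableau `t`, of the entry `m`. -/
def colIdx (lam : ℕ → ℕ) (n m : ℕ) : ℕ :=
  m - ∑ i ∈ Finset.range (rowIdx lam n m), lam i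

/-- Partial sums of `lam`. -/
def psum (lam : ℕ → ℕ) (j : ℕ) : ℕ := ∑ i ∈ Finset.range j, lam i

lemma psum_mono (lam : ℕ → ℕ) : Monotone (psum lam) := fun _ _ h =>
  Finset.sum_le_sum_of_subset (Finset.range_subset_range.2 h)

lemma psum_succ (lam : ℕ → ℕ) (j : ℕ) : psum lam (j + 1) = psum lam j + lam j :=
  Finset.sum_range_succ _ _

lemma rowIdx_eq (lam : ℕ → ℕ) (n m j : ℕ) (hjn : j ≤ n)
    (h1 : psum lam j ≤ m) (h2 : m < psum lam (j + 1)) :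
    rowIdx lam n m = j := by
  unfold rowIdx
  have key : (Finset.range n).filter
      (fun j' => ∑ i ∈ Finset.range (j' + 1), lam i ≤ m) = Finset.range j := by
    ext j'
    simp only [Finset.mem_filter, Finset.mem_range]
    constructor
    · rintro ⟨-, hle⟩
      by_contra h
      push_neg at h
      have : psum lam (j + 1) ≤ psum lam (j' + 1) := psum_mono lam (by omega)
      have hle' : psum lam (j' + 1) ≤ m := hle
      omega
    · intro hj'
      have : psum lam (j' + 1) ≤ psum lam j := psum_mono lam (by omega)
      exact ⟨by omega, le_trans this h1⟩
  rw [key, Finset.card_range]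

lemma colIdx_def (lam : ℕ → ℕ) (n m : ℕ) :
    colIdx lam n m = m - psum lam (rowIdx lam n m) := rfl

/-- Let `t` be the greatest `λ`-tableau in the dominance order
(row `j` of `t` consists of the entries `λ_1+⋯+λ_{j-1}+1, …, λ_1+⋯+λ_j`).
If `s` is a standard `λ`-tableau (encoded by row and column functions
`r`, `c`) such that, for every `j`, the entries of row `j` of `t` occupy
pairwise distinct columns of `s`, then `s = t`. -/
theorem stmt_14 (n k : ℕ) (lam : ℕ → ℕ)
    (hanti : ∀ i j, i ≤ j → lam j ≤ lam i)
    (hsupp : ∀ i, lam i ≠ 0 ↔ i < k)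
    (hsum : ∑ i ∈ Finset.range k, lam i = n)
    (r c : Fin n → ℕ)
    -- s is a λ-tableau
    (hshape : ∀ m : Fin n, r m < k ∧ c m < lam (r m))
    (hinj : Function.Injective (fun m : Fin n => (r m, c m)))
    -- s is standard
    (hrowstd : ∀ m m' : Fin n, r m = r m' → c m < c m' → m < m')
    (hcolstd : ∀ m m' : Fin n, c m = c m' → r m < r m' → m < m')
    -- the entries of each row of t occupy pairwise distinct columns of s
    (hdistinct : ∀ m m' : Fin n, rowIdx lam n m = rowIdx lam n m' →
      m ≠ m' → c m ≠ c m') :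
    -- then s = t
    ∀ m : Fin n, r m = rowIdx lam n m ∧ c m = colIdx lam n m := by
  classical
  have hsum' : psum lam k = n := hsum
  have hpos : ∀ i, i < k → 0 < lam i := fun i hi =>
    Nat.pos_of_ne_zero ((hsupp i).2 hi)
  have hzero : ∀ i, k ≤ i → lam i = 0 := fun i hi => by
    by_contra h
    exact absurd ((hsupp i).1 h) (by omega)
  have hkn : k ≤ n := by
    calc k = ∑ _i ∈ Finset.range k, 1 := by simp
    _ ≤ ∑ i ∈ Finset.range k, lam i :=
        Finset.sum_le_sum (fun i hi => hpos i (Finset.mem_range.1 hi))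
    _ = n := hsum
  -- specification of rowIdx for m < n
  have hspec : ∀ m : ℕ, m < n →
      psum lam (rowIdx lam n m) ≤ m ∧ m < psum lam (rowIdx lam n m + 1) ∧
        rowIdx lam n m < k := by
    intro m hm
    have hex : ∃ j, m < psum lam (j + 1) := by
      refine ⟨k, ?_⟩
      rw [psum_succ, hzero k le_rfl, hsum']
      omega
    set j := Nat.find hex with hjdef
    have hj2 : m < psum lam (j + 1) := Nat.find_spec hex
    have hj1 : psum lam j ≤ m := by
      rcases Nat.eq_zero_or_pos j with h0 | h0
      · rw [h0]; simp [psum]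
      · have hmin := Nat.find_min hex (show j - 1 < j by omega)
        rw [show j - 1 + 1 = j by omega] at hmin
        omega
    have hj3 : j < k := by
      by_contra h
      push_neg at h
      have : psum lam k ≤ psum lam j := psum_mono lam h
      omega
    have := rowIdx_eq lam n m j (by omega) hj1 hj2
    rw [this]
    exact ⟨hj1, hj2, hj3⟩
  -- surjectivity of s onto the shape
  have hsurj : ∀ i col, i < k → col < lam i → ∃ e : Fin n, r e = i ∧ c e = col := by
    intro i col hik hcol
    set shape : Finset (ℕ × ℕ) :=
      (Finset.range k).biUnion (fun i => {i} ×ˢ Finset.range (lam i)) with hshdef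
    have hcard : shape.card = n := by
      rw [hshdef, Finset.card_biUnion]
      · simpa using hsum
      · intro a _ b _ hab
        simp only [Finset.disjoint_left, Finset.mem_product, Finset.mem_singleton]
        intro p hp hq
        exact hab (hp.1.symm.trans hq.1)
    have himg : Finset.image (fun m : Fin n => (r m, c m)) Finset.univ = shape := by
      apply Finset.eq_of_subset_of_card_le
      · intro p hp
        simp only [Finset.mem_image, Finset.mem_univ, true_and] at hp
        obtain ⟨m, rfl⟩ := hp
        simp only [hshdef, Finset.mem_biUnion, Finset.mem_range, Finset.mem_product,
          Finset.mem_singleton]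
        exact ⟨r m, (hshape m).1, rfl, (hshape m).2⟩
      · rw [hcard, Finset.card_image_of_injective _ hinj, Finset.card_univ,
          Fintype.card_fin]
    have hmem : (i, col) ∈ shape := by
      simp only [hshdef, Finset.mem_biUnion, Finset.mem_range, Finset.mem_product,
        Finset.mem_singleton]
      exact ⟨i, hik, rfl, hcol⟩
    rw [← himg] at hmem
    simp only [Finset.mem_image, Finset.mem_univ, true_and, Prod.mk.injEq] at hmem
    obtain ⟨e, he1, he2⟩ := hmem
    exact ⟨e, he1, he2⟩
  -- main claim by strong induction on m
  suffices H : ∀ M : ℕ, ∀ m : Fin n, (m : ℕ) < M →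
      r m = rowIdx lam n m ∧ c m = colIdx lam n m by
    intro m; exact H ((m : ℕ) + 1) m (Nat.lt_succ_self _)
  intro M
  induction M with
  | zero => intro m h; omega
  | succ M ih =>
    intro m hm
    rcases Nat.lt_or_ge (m : ℕ) M with hlt | hge
    · exact ih m hlt
    have IH : ∀ m' : Fin n, (m' : ℕ) < (m : ℕ) →
        r m' = rowIdx lam n m' ∧ c m' = colIdx lam n m' := fun m' hm' =>
      ih m' (by omega)
    obtain ⟨h1, h2, h3⟩ := hspec (m : ℕ) m.isLt
    set j := rowIdx lam n (m : ℕ) with hj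
    have hsucc : psum lam (j + 1) = psum lam j + lam j := psum_succ lam j
    -- a smaller entry at a known cell of row j' of t has the expected value
    have hdet : ∀ (e : Fin n), (e : ℕ) < (m : ℕ) →
        (e : ℕ) = psum lam (rowIdx lam n (e : ℕ)) + c e := by
      intro e he
      obtain ⟨he1, _, _⟩ := hspec (e : ℕ) e.isLt
      have hce := (IH e he).2
      rw [hce, colIdx_def]
      omega
    -- Step 1 : r m is not below row j
    have hge_r : j ≤ r m := by
      by_contra h
      push_neg at h
      set i := r m with hi
      have hik : i < k := (hshape m).1
      have hci : c m < lam i := (hshape m).2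
      have helt : psum lam i + c m < psum lam (i + 1) := by
        rw [psum_succ]; omega
      have hejm : psum lam i + c m < (m : ℕ) := by
        have : psum lam (i + 1) ≤ psum lam j := psum_mono lam (by omega)
        omega
      have hen : psum lam i + c m < n := by omega
      obtain ⟨e, hval⟩ : ∃ e : Fin n, (e : ℕ) = psum lam i + c m := ⟨⟨_, hen⟩, rfl⟩
      have helt' : (e : ℕ) < (m : ℕ) := by omega
      have hrowe : rowIdx lam n (e : ℕ) = i :=
        rowIdx_eq lam n _ i (by omega) (by omega) (by omega)
      have hre : r e = i := by rw [(IH e helt').1, hrowe]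
      have hce : c e = c m := by
        have hce' := (IH e helt').2
        rw [colIdx_def, hrowe] at hce'
        omega
      have heq : e = m := hinj (by simp [hre, hce, hi, Prod.ext_iff])
      have : (e : ℕ) = (m : ℕ) := by rw [heq]
      omega
    -- Step 2 : r m is not above row j
    have hle_r : r m ≤ j := by
      by_contra h
      push_neg at h
      have hcm : c m < lam j := lt_of_lt_of_le (hshape m).2 (hanti j (r m) h.le)
      obtain ⟨e, hre, hce⟩ := hsurj j (c m) h3 hcm
      have helt : e < m := hcolstd e m hce (by omega)
      have hrowe : rowIdx lam n (e : ℕ) = j := by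
        have := (IH e helt).1
        omega
      have := hdistinct m e (by rw [← hj, hrowe]) (by
        intro hh; rw [hh] at helt; exact lt_irrefl _ helt)
      exact this hce.symm
    have hrm : r m = j := le_antisymm hle_r hge_r
    -- Step 3 : c m is not to the left of colIdx m
    have hge_c : (m : ℕ) - psum lam j ≤ c m := by
      by_contra h
      push_neg at h
      have hejm : psum lam j + c m < (m : ℕ) := by omega
      have hen : psum lam j + c m < n := by omega
      obtain ⟨e, hval⟩ : ∃ e : Fin n, (e : ℕ) = psum lam j + c m := ⟨⟨_, hen⟩, rfl⟩
      have helt' : (e : ℕ) < (m : ℕ) := by omega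
      have hrowe : rowIdx lam n (e : ℕ) = j :=
        rowIdx_eq lam n _ j (by omega) (by omega) (by rw [psum_succ]; omega)
      have hce : c e = c m := by
        have hce' := (IH e helt').2
        rw [colIdx_def, hrowe] at hce'
        omega
      have hne : m ≠ e := by
        intro hh
        have : (m : ℕ) = (e : ℕ) := by rw [hh]
        omega
      exact hdistinct m e (by rw [← hj, hrowe]) hne hce.symm
    -- Step 4 : c m is not to the right of colIdx m
    have hle_c : c m ≤ (m : ℕ) - psum lam j := by
      by_contra h
      push_neg at h
      set col := (m : ℕ) - psum lam j with hcol
      have hcolj : col < lam j := by omega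
      obtain ⟨e, hre, hce⟩ := hsurj j col h3 hcolj
      have helt : e < m := hrowstd e m (by rw [hre, hrm]) (by omega)
      have hrowe : rowIdx lam n (e : ℕ) = j := by
        have := (IH e helt).1
        omega
      have hd := hdet e helt
      rw [hrowe, hce] at hd
      omega
    constructor
    · rw [hrm]
    · rw [colIdx_def, ← hj]
      omega
end

section
/- Let p ≥ 5 be a prime and n ≥ 4 with p dividing n. Then the partition (n-2,2) has p-core (p-2,2), so that n - |(p-2,2)| = n - p is divisible by p, and its p-weight is (n-p)/p. -/
lemma core_no_removal (p : ℕ) (hp5 : 5 ≤ p) :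
    ∀ nu, IsPartitionFun nu →
      ¬ IsRimHookRemoval p (fun i => if i = 0 then p - 2 else if i = 1 then 2 else 0) nu := by
  intro nu _ ⟨r, s, hrs, _, _, hlt, hmid, hsum⟩
  have hs : nu s < (if s = 0 then p - 2 else if s = 1 then 2 else 0) := hlt s hrs le_rfl
  have hs1 : s ≤ 1 := by
    by_contra h
    simp only [show s ≠ 0 by omega, show s ≠ 1 by omega, if_false] at hs
    omega
  interval_cases s
  · -- s = 0, r = 0
    interval_cases r
    rw [show Finset.Icc 0 0 = {0} from rfl, Finset.sum_singleton] at hsum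
    norm_num at hsum
    have := hlt 0 le_rfl le_rfl
    norm_num at this
    omega
  · -- s = 1
    interval_cases r
    · have h0 : nu 0 = 2 - 1 := by
        have := hmid 0 le_rfl Nat.zero_lt_one
        simpa using this
      have h1 : nu 1 < 2 := by
        have := hlt 1 (by omega) le_rfl
        simpa using this
      rw [show Finset.Icc 0 1 = {0, 1} from rfl] at hsum
      rw [Finset.sum_insert (by decide), Finset.sum_singleton] at hsum
      norm_num at hsum
      norm_num at hsum
      omega
    · rw [show Finset.Icc 1 1 = {1} from rfl, Finset.sum_singleton] at hsum
      have h1 : nu 1 < 2 := by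
        have := hlt 1 le_rfl le_rfl
        simpa using this
      norm_num at hsum
      omega

lemma core_ind (p : ℕ) (hp5 : 5 ≤ p) (m : ℕ) :
    IsPCoreWithWeight p
      (fun i => if i = 0 then p * (m + 1) - 2 else if i = 1 then 2 else 0)
      (fun i => if i = 0 then p - 2 else if i = 1 then 2 else 0) m := by
  induction m with
  | zero =>
      have : (fun i => if i = 0 then p * (0 + 1) - 2 else if i = 1 then 2 else 0)
          = (fun i => if i = 0 then p - 2 else if i = 1 then 2 else 0) := by
        funext i
        simp
      rw [this]
      exact IsPCoreWithWeight.core _ (core_no_removal p hp5)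
  | succ m ih =>
      refine IsPCoreWithWeight.step _
        (fun i => if i = 0 then p * (m + 1) - 2 else if i = 1 then 2 else 0) _ m ?_ ?_ ih
      · refine ⟨fun i j hij => ?_, 2, fun i hi => ?_⟩
        · have hpm : 5 ≤ p * (m + 1) := le_trans hp5 (Nat.le_mul_of_pos_right p (by omega))
          by_cases hj0 : j = 0
          · simp [hj0, show i = 0 by omega]
          · by_cases hj1 : j = 1
            · rcases Nat.lt_or_ge i 1 with h | h
              · simp [hj1, show i = 0 by omega]; omega
              · simp [hj1, show i = 1 by omega]
            · simp [hj0, hj1]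
        · simp [show i ≠ 0 by omega, show i ≠ 1 by omega]
      · refine ⟨0, 0, le_rfl, fun i hi => absurd hi (Nat.not_lt_zero i),
          fun i hi => by simp [show i ≠ 0 by omega], fun i hr hs => ?_,
          fun i hr hs => absurd hs (Nat.not_lt_zero i), ?_⟩
        · have : i = 0 := by omega
          subst this
          norm_num
          have h1 : 5 ≤ p * (m + 1) := le_trans hp5 (Nat.le_mul_of_pos_right p (by omega))
          have h2 : p * (m + 1 + 1) = p * (m + 1) + p := by ring
          omega
        · rw [show Finset.Icc 0 0 = {0} from rfl, Finset.sum_singleton]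
          norm_num
          have h1 : 5 ≤ p * (m + 1) := le_trans hp5 (Nat.le_mul_of_pos_right p (by omega))
          have h2 : p * (m + 1 + 1) = p * (m + 1) + p := by ring
          omega

/-- Let `p ≥ 5` be a prime and `n ≥ 4` with `p ∣ n`.  Then the
`p`-core of the partition `(n-2, 2)` is `(p-2, 2)`; in particular
`n - |(p-2,2)| = n - p` is divisible by `p`, and the weight is `(n-p)/p`. -/
theorem stmt_16 (p n : ℕ) (hp : p.Prime) (hp5 : 5 ≤ p) (hn : 4 ≤ n)
    (hdvd : p ∣ n) :
    p ∣ (n - p) ∧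
    IsPCoreWithWeight p
      (fun i => if i = 0 then n - 2 else if i = 1 then 2 else 0)
      (fun i => if i = 0 then p - 2 else if i = 1 then 2 else 0)
      ((n - p) / p) := by
  obtain ⟨m, rfl⟩ := hdvd
  have hm : 1 ≤ m := by
    rcases Nat.eq_zero_or_pos m with h | h
    · subst h; simp at hn
    · exact h
  obtain ⟨k, rfl⟩ : ∃ k, m = k + 1 := ⟨m - 1, by omega⟩
  have hsub : p * (k + 1) - p = p * k := by
    have : p * (k + 1) = p * k + p := by ring
    omega
  have hdiv : (p * (k + 1) - p) / p = k := by
    rw [hsub, Nat.mul_div_cancel_left k (by omega)]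
  refine ⟨⟨k, hsub⟩, ?_⟩
  rw [hdiv]
  exact core_ind p hp5 k
end
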